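/- arXiv:1408.6259 — 5 statements merged into one kernel-verified Lean document; each statement's English description precedes it below -/
import Mathlib

section
/- Let $G$ be an infinite group whose cardinality $\varkappa$ is a regular cardinal. Then there exists a partition of $G$ into countably many cells $G=\bigcup_{n\in\omega}A_n$ such that $cov(A_nA_n^{-1})=\varkappa$ for each $n\in\omega$. -/
/-!
Fix an exhaustive chain of subgroups `H α` (`α < κ`), continuous at limits, with `#(H α) < κ`
and every step `H α < H (α + 1)` proper; the rank of `g ≠ 1` is the `α` with
`g ∈ H (α + 1) \ H α`. Writing `g = p * r` with `r` a fixed representative of the coset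
`H (rank g) * g` and `p ∈ H (rank g)`, and iterating on `p`, each `g` gets as colour the finite
list of the finite parts `n` of its successive ranks `ω * β + n`; there are countably many
colours. If `a ≠ b` have the same colour, the rank of `a * b⁻¹` is one of the ranks occurring
in that iteration, so its finite part belongs to the colour. Given `X` with `#X < κ`,
regularity bounds the ranks of `X` by some `β < κ`, and an element of rank `ω * β + n`, with `n`
outside the colour of `A`, is not in `X * (A * A⁻¹)`. Countable groups are split into
singletons, and countably many colour classes can always be refined to an `ℕ`-indexed
partition into nonempty sets.
-/

open Cardinal Pointwise

/-- The covering number of a subset `A` of a group `G`: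
the least cardinality of a set `X ⊆ G` with `X * A = G`. -/
noncomputable def cov {G : Type*} [Group G] (A : Set G) : Cardinal :=
  sInf {c : Cardinal | ∃ X : Set G, #X = c ∧ X * A = Set.univ}

universe u

namespace Subgroup

variable {G : Type u} [Group G]

theorem cardinalMk_closure_le_max (s : Set G) : #(closure s) ≤ max #s ℵ₀ := by
  have hmon : ((closure s : Subgroup G) : Set G) = Submonoid.closure (s ∪ s⁻¹) := by
    rw [← closure_toSubmonoid]; rfl
  calc #(closure s) = #(Submonoid.closure (s ∪ s⁻¹)) := by
        rw [← SetLike.coe_sort_coe, hmon, SetLike.coe_sort_coe]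
    _ ≤ #(FreeMonoid ↥(s ∪ s⁻¹)) := by
        rw [Submonoid.closure_eq_mrange, ← SetLike.coe_sort_coe, MonoidHom.coe_mrange]
        exact mk_range_le
    _ ≤ max ℵ₀ #↥(s ∪ s⁻¹) := mk_list_le_max _
    _ ≤ max #s ℵ₀ := by
        rw [max_comm]
        refine max_le ((mk_union_le _ _).trans ?_) le_sup_right
        simpa [mk_inv] using add_le_max #s #s

theorem mul_inv_out_mem (H : Subgroup G) (g : G) :
    g * (Quotient.mk (QuotientGroup.rightRel H) g).out⁻¹ ∈ H := by
  have := Quotient.mk_out (s := QuotientGroup.rightRel H) g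
  rwa [QuotientGroup.rightRel_apply] at this

theorem exists_lt_mem_closure_image_Iio_add_one {f : Ordinal.{u} → G} {γ : Ordinal.{u}}
    {g : G} (hg : g ∈ closure (f '' Set.Iio γ)) (hg1 : g ≠ 1) :
    ∃ β < γ, g ∈ closure (f '' Set.Iio (β + 1)) := by
  have hmono {β β' : Ordinal.{u}} (h : β ≤ β') :
      closure (f '' Set.Iio (β + 1)) ≤ closure (f '' Set.Iio (β' + 1)) :=
    closure_mono (Set.image_mono (Set.Iio_subset_Iio (by gcongr)))
  suffices g = 1 ∨ ∃ β < γ, g ∈ closure (f '' Set.Iio (β + 1)) from this.resolve_left hg1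
  clear hg1
  induction hg using closure_induction with
  | mem _ hx =>
    obtain ⟨β, hβ, rfl⟩ := hx
    exact Or.inr ⟨β, hβ,
      subset_closure ⟨β, Set.mem_Iio.2 (Order.lt_add_one_iff.2 le_rfl), rfl⟩⟩
  | one => exact Or.inl rfl
  | mul x y _ _ hx hy =>
    rcases hx with rfl | ⟨β, hβ, hx⟩
    · simpa using hy
    rcases hy with rfl | ⟨β', hβ', hy⟩
    · simpa using Or.inr ⟨β, hβ, hx⟩
    exact Or.inr ⟨max β β', max_lt hβ hβ',
      mul_mem (hmono (le_max_left _ _) hx) (hmono (le_max_right _ _) hy)⟩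
  | inv x _ hx =>
    rcases hx with rfl | ⟨β, hβ, hx⟩
    · exact Or.inl inv_one
    · exact Or.inr ⟨β, hβ, inv_mem hx⟩

end Subgroup

noncomputable def Ordinal.finitePart (o : Ordinal) : ℕ :=
  Cardinal.toNat (o % Ordinal.omega0).card

theorem Ordinal.finitePart_omega0_mul_add (β : Ordinal) (n : ℕ) :
    (Ordinal.omega0 * β + n).finitePart = n := by
  rw [finitePart, mul_add_mod_self, mod_eq_of_lt (natCast_lt_omega0 n), card_nat, toNat_natCast]

section Cov

variable {G : Type u} [Group G]

theorem cov_le_card {B : Set G} (hB : (1 : G) ∈ B) : cov B ≤ #G :=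
  csInf_le' ⟨Set.univ, mk_univ, Set.univ_mul_of_one_mem hB⟩

theorem cov_eq_card_of_forall_mul_ne_univ {B : Set G} (hB : (1 : G) ∈ B)
    (hsmall : ∀ X : Set G, #X < #G → X * B ≠ Set.univ) : cov B = #G := by
  refine (cov_le_card hB).antisymm
    (le_csInf ⟨#G, Set.univ, mk_univ, Set.univ_mul_of_one_mem hB⟩ ?_)
  rintro _ ⟨X, rfl, hX⟩
  by_contra h
  exact hsmall X (not_le.1 h) hX

theorem cov_one : cov ({1} : Set G) = #G :=
  cov_eq_card_of_forall_mul_ne_univ rfl fun X hX hXu => by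
    rw [Set.singleton_one, mul_one] at hXu
    rw [hXu, mk_univ] at hX
    exact hX.false

end Cov

theorem exists_nat_partition_fibers {α T : Type*} [Countable T] (c : α → T)
    (hc : (Set.range c).Infinite) :
    ∃ A : ℕ → Set α, (⋃ n, A n) = Set.univ ∧ (∀ m n, m ≠ n → Disjoint (A m) (A n)) ∧
      ∀ n, (A n).Nonempty ∧ ∃ t, A n = c ⁻¹' {t} := by
  have := hc.to_subtype
  obtain ⟨_⟩ := nonempty_denumerable (Set.range c)
  let e := Denumerable.eqv (Set.range c)
  refine ⟨fun n => c ⁻¹' {(e.symm n : T)}, ?_, fun m n hmn => ?_, fun n => ⟨?_, _, rfl⟩⟩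
  · exact Set.eq_univ_of_forall fun g =>
      Set.mem_iUnion.2 ⟨e ⟨c g, Set.mem_range_self g⟩, by simp [e]⟩
  · refine Disjoint.preimage _ (Set.disjoint_singleton.2 fun h => hmn ?_)
    exact e.symm.injective (Subtype.ext h)
  · obtain ⟨g, hg⟩ := (e.symm n).2
    exact ⟨g, hg⟩

theorem exists_nat_partition_subordinate {α T : Type*} [Infinite α] [Countable T] (c : α → T) :
    ∃ A : ℕ → Set α, (⋃ n, A n) = Set.univ ∧ (∀ m n, m ≠ n → Disjoint (A m) (A n)) ∧
      ∀ n, (A n).Nonempty ∧ ∃ t, A n ⊆ c ⁻¹' {t} := by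
  let j := Infinite.natEmbedding α
  -- tagging the points of an injective sequence makes infinitely many fibres nonempty
  let c' : α → T × Option ℕ := fun g => (c g, Function.partialInv j g)
  have hc' : (Set.range c').Infinite := by
    refine Set.infinite_of_injective_forall_mem (f := c' ∘ j) (fun m n h => ?_)
      fun n => Set.mem_range_self _
    simpa [c', Function.partialInv_left j.injective] using congr_arg Prod.snd h
  obtain ⟨A, hU, hD, hA⟩ := exists_nat_partition_fibers c' hc'
  refine ⟨A, hU, hD, fun n => ⟨(hA n).1, ?_⟩⟩
  obtain ⟨t, ht⟩ := (hA n).2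
  exact ⟨t.1, fun g hg => congr_arg Prod.fst (ht ▸ hg : g ∈ c' ⁻¹' {t})⟩

theorem exists_nat_partition_cov_eq {G : Type u} [Group G] [Infinite G] {T : Type*}
    [Countable T] (c : G → T)
    (hc : ∀ (t : T) (A : Set G), A.Nonempty → A ⊆ c ⁻¹' {t} → cov (A * A⁻¹) = #G) :
    ∃ A : ℕ → Set G, (⋃ n, A n) = Set.univ ∧ (∀ m n, m ≠ n → Disjoint (A m) (A n)) ∧
      ∀ n, cov (A n * (A n)⁻¹) = #G := by
  obtain ⟨A, hU, hD, hA⟩ := exists_nat_partition_subordinate c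
  refine ⟨A, hU, hD, fun n => ?_⟩
  obtain ⟨hne, t, ht⟩ := hA n
  exact hc t _ hne ht

-- `exists_lt_mem_succ` says both that the stage `0` is trivial and that the chain is continuous
-- at limit ordinals.
structure OrdinalFiltration (G : Type u) [Group G] where
  stage : Ordinal.{u} → Subgroup G
  monotone : Monotone stage
  exists_mem_succ : ∀ g, ∃ α, g ∈ stage (α + 1)
  exists_lt_mem_succ : ∀ {γ : Ordinal.{u}} {g : G}, g ∈ stage γ → g ≠ 1 →
    ∃ β < γ, g ∈ stage (β + 1)

namespace OrdinalFiltration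

variable {G : Type u} [Group G] (F : OrdinalFiltration G) {a b g : G} {α γ : Ordinal.{u}}

noncomputable def rank (g : G) : Ordinal.{u} :=
  sInf {α | g ∈ F.stage (α + 1)}

theorem mem_stage_rank_add_one (g : G) : g ∈ F.stage (F.rank g + 1) :=
  csInf_mem (F.exists_mem_succ g)

theorem rank_le (h : g ∈ F.stage (α + 1)) : F.rank g ≤ α :=
  csInf_le' h

theorem mem_stage_iff (hg : g ≠ 1) : g ∈ F.stage γ ↔ F.rank g < γ := by
  refine ⟨fun h => ?_, fun h =>
    F.monotone (Order.add_one_le_of_lt h) (F.mem_stage_rank_add_one g)⟩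
  obtain ⟨β, hβ, hgβ⟩ := F.exists_lt_mem_succ h hg
  exact (F.rank_le hgβ).trans_lt hβ

theorem rank_one : F.rank 1 = 0 :=
  le_antisymm (F.rank_le (one_mem _)) zero_le

theorem rank_inv (g : G) : F.rank g⁻¹ = F.rank g :=
  le_antisymm (F.rank_le (inv_mem (F.mem_stage_rank_add_one g)))
    (F.rank_le (by simpa using inv_mem (F.mem_stage_rank_add_one g⁻¹)))

theorem rank_mul_le (a b : G) : F.rank (a * b) ≤ max (F.rank a) (F.rank b) :=
  F.rank_le <| mul_mem
    (F.monotone (by gcongr; exact le_max_left _ _) (F.mem_stage_rank_add_one a))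
    (F.monotone (by gcongr; exact le_max_right _ _) (F.mem_stage_rank_add_one b))

theorem rank_mul_eq_right (h : F.rank a < F.rank b) : F.rank (a * b) = F.rank b := by
  refine ((F.rank_mul_le a b).trans (max_le h.le le_rfl)).antisymm ?_
  have := F.rank_mul_le a⁻¹ (a * b)
  rw [inv_mul_cancel_left, rank_inv] at this
  exact (le_max_iff.1 this).resolve_left h.not_ge

theorem rank_mul_eq_max (h : F.rank a ≠ F.rank b) :
    F.rank (a * b) = max (F.rank a) (F.rank b) := by
  rcases h.lt_or_gt with h | h
  · rw [F.rank_mul_eq_right h, max_eq_right h.le]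
  · rw [← F.rank_inv (a * b), mul_inv_rev, F.rank_mul_eq_right (by simpa [rank_inv] using h),
      rank_inv, max_eq_left h.le]

theorem rank_mul_inv_eq_or_eq (h : ¬ (F.rank a = F.rank b ∧ a * b⁻¹ ∈ F.stage (F.rank a))) :
    F.rank (a * b⁻¹) = F.rank a ∨ F.rank (a * b⁻¹) = F.rank b := by
  by_cases hab : F.rank a = F.rank b
  · have hmem : a * b⁻¹ ∉ F.stage (F.rank a) := fun hmem => h ⟨hab, hmem⟩
    have hne : a * b⁻¹ ≠ 1 := fun h1 => hmem (h1 ▸ one_mem _)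
    refine Or.inl ((F.rank_mul_le a b⁻¹).trans ?_ |>.antisymm ?_)
    · rw [rank_inv, ← hab, max_self]
    · exact not_lt.1 fun hlt => hmem ((F.mem_stage_iff hne).2 hlt)
  · rw [F.rank_mul_eq_max (by rwa [rank_inv]), rank_inv]
    exact max_choice _ _

/-- `g` is `F.lowerPart g` times a fixed representative of its right coset of the stage
`F.rank g`. -/
noncomputable def lowerPart (g : G) : G :=
  g * (Quotient.mk (QuotientGroup.rightRel (F.stage (F.rank g))) g).out⁻¹

theorem lowerPart_mem (g : G) : F.lowerPart g ∈ F.stage (F.rank g) :=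
  Subgroup.mul_inv_out_mem _ g

theorem rank_lowerPart_lt (h : F.lowerPart g ≠ 1) : F.rank (F.lowerPart g) < F.rank g :=
  (F.mem_stage_iff h).1 (F.lowerPart_mem g)

theorem lowerPart_mul_inv (hab : F.rank a = F.rank b) (hmem : a * b⁻¹ ∈ F.stage (F.rank a)) :
    F.lowerPart a * (F.lowerPart b)⁻¹ = a * b⁻¹ := by
  have hrel : QuotientGroup.rightRel (F.stage (F.rank a)) b a := by
    rwa [QuotientGroup.rightRel_apply]
  rw [lowerPart, lowerPart, ← hab, Quotient.sound hrel]
  group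

-- The inner test only serves termination: `F.rank 1 = 0` need not be below `F.rank g`.
open Classical in
noncomputable def color (g : G) : List ℕ :=
  if g = 1 then [] else
    (F.rank g).finitePart :: if F.lowerPart g = 1 then [] else color (F.lowerPart g)
termination_by F.rank g
decreasing_by exact F.rank_lowerPart_lt ‹_›

theorem color_one : F.color 1 = [] := by
  rw [color, if_pos rfl]

theorem color_of_ne_one (hg : g ≠ 1) :
    F.color g = (F.rank g).finitePart :: F.color (F.lowerPart g) := by
  rw [color, if_neg hg]
  split_ifs with h
  · rw [h, color_one]
  · rfl

theorem color_eq_nil : F.color g = [] ↔ g = 1 := by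
  refine ⟨fun h => ?_, fun h => h ▸ F.color_one⟩
  by_contra hg
  simp [F.color_of_ne_one hg] at h

theorem ne_one_of_color_eq (hab : a ≠ b) (h : F.color a = F.color b) : a ≠ 1 := by
  rintro rfl
  rw [color_one, eq_comm, color_eq_nil] at h
  exact hab h.symm

theorem finitePart_rank_mul_inv_mem_color {a b : G} (hab : a ≠ b) (h : F.color a = F.color b) :
    (F.rank (a * b⁻¹)).finitePart ∈ F.color a := by
  have ha := F.ne_one_of_color_eq hab h
  have hb := F.ne_one_of_color_eq hab.symm h.symm
  rw [F.color_of_ne_one ha, F.color_of_ne_one hb, List.cons.injEq] at h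
  rw [F.color_of_ne_one ha]
  by_cases hcoset : F.rank a = F.rank b ∧ a * b⁻¹ ∈ F.stage (F.rank a)
  · have hlow := F.lowerPart_mul_inv hcoset.1 hcoset.2
    have hne : F.lowerPart a ≠ F.lowerPart b := fun he => hab (by
      rw [he, mul_inv_cancel, eq_comm, mul_inv_eq_one] at hlow; exact hlow)
    have hlow1 := F.ne_one_of_color_eq hne h.2
    have := finitePart_rank_mul_inv_mem_color hne h.2
    rw [hlow] at this
    exact List.mem_cons_of_mem _ this
  · rcases F.rank_mul_inv_eq_or_eq hcoset with hr | hr <;> simp [hr, h.1]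
termination_by F.rank a
decreasing_by exact F.rank_lowerPart_lt hlow1

theorem mul_mul_inv_ne_univ (hreg : (#G).IsRegular) (hG : ℵ₀ < #G)
    (hF : Set.range F.rank = Set.Iio (#G).ord) {t : List ℕ} {A : Set G}
    (hA : A ⊆ F.color ⁻¹' {t}) {X : Set G} (hX : #X < #G) : X * (A * A⁻¹) ≠ Set.univ := by
  intro hXA
  have hrank (g : G) : F.rank g < (#G).ord := hF.subset (Set.mem_range_self g)
  set β := ⨆ x : X, F.rank x + 1
  have hβ : β < (#G).ord := Ordinal.iSup_lt_of_lt_cof (by rwa [hreg.cof_ord])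
    fun x => (isSuccLimit_ord hreg.aleph0_le).add_one_lt (hrank x)
  obtain ⟨k, hk⟩ := Infinite.exists_notMem_finset t.toFinset
  -- an element of rank `γ` is not of the form `x * (a * b⁻¹)`, as `k` is missing from `t`
  set γ := Ordinal.omega0 * β + k
  have hγ : γ < (#G).ord :=
    Ordinal.isPrincipal_add_ord hreg.aleph0_le
      (Ordinal.isPrincipal_mul_ord hreg.aleph0_le (lt_ord.2 (by simpa using hG)) hβ)
      (lt_ord.2 (by simpa using (natCast_lt_aleph0 (n := k)).trans hG))
  obtain ⟨g, hg⟩ : γ ∈ Set.range F.rank := hF ▸ hγ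
  obtain ⟨x, hx, _, ⟨a, ha, b, hb, rfl⟩, rfl⟩ := hXA ▸ Set.mem_univ g
  beta_reduce at hg
  have hxγ : F.rank x < γ := calc
    F.rank x < F.rank x + 1 := Order.lt_add_one_iff.2 le_rfl
    _ ≤ β := Ordinal.le_iSup (fun y : X => F.rank y + 1) ⟨x, hx⟩
    _ ≤ γ := (Ordinal.le_mul_right β Ordinal.omega0_pos).trans le_self_add
  have hd : F.rank (a * b) = γ := by
    have := F.rank_mul_eq_right (a := x⁻¹) (b := x * (a * b)) (by rwa [rank_inv, hg])
    rwa [inv_mul_cancel_left, hg] at this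
  have hab : a ≠ b⁻¹ := by
    rintro rfl
    rw [inv_mul_cancel, rank_one] at hd
    exact not_lt_zero (hd ▸ hxγ)
  have := F.finitePart_rank_mul_inv_mem_color hab ((hA ha).trans (hA hb).symm)
  rw [inv_inv, hd, Ordinal.finitePart_omega0_mul_add, hA ha] at this
  exact hk (List.mem_toFinset.2 this)

theorem cov_mul_inv_eq_card (hreg : (#G).IsRegular) (hG : ℵ₀ < #G)
    (hF : Set.range F.rank = Set.Iio (#G).ord) {t : List ℕ} {A : Set G} (hne : A.Nonempty)
    (hA : A ⊆ F.color ⁻¹' {t}) : cov (A * A⁻¹) = #G := by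
  obtain ⟨a, ha⟩ := hne
  exact cov_eq_card_of_forall_mul_ne_univ ⟨a, ha, a⁻¹, by simpa using ha, mul_inv_cancel a⟩
    fun X hX => F.mul_mul_inv_ne_univ hreg hG hF hA hX

section OfIndex

variable (idx : G → Ordinal.{u})

open Classical in
noncomputable def leastOutside (S : Set G) : G :=
  if h : Sᶜ.Nonempty then Function.argminOn idx Sᶜ h else 1

theorem leastOutside_notMem {S : Set G} (h : Sᶜ.Nonempty) : leastOutside idx S ∉ S := by
  rw [leastOutside, dif_pos h]
  exact Function.argminOn_mem idx Sᶜ h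

theorem index_leastOutside_le {S : Set G} {g : G} (hg : g ∉ S) :
    idx (leastOutside idx S) ≤ idx g := by
  rw [leastOutside, dif_pos ⟨g, hg⟩]
  exact not_lt.1 (Function.not_lt_argminOn idx Sᶜ hg)

noncomputable def generator : Ordinal.{u} → G :=
  Ordinal.lt_wf.fix fun α x =>
    leastOutside idx (Subgroup.closure (Set.range fun β : Set.Iio α => x β β.2))

noncomputable def generatedStage (α : Ordinal.{u}) : Subgroup G :=
  Subgroup.closure (generator idx '' Set.Iio α)

theorem generator_eq (α : Ordinal.{u}) :
    generator idx α = leastOutside idx (generatedStage idx α) := by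
  rw [generator, WellFounded.fix_eq, generatedStage, Set.image_eq_range]
  rfl

theorem generatedStage_mono : Monotone (generatedStage idx) :=
  fun _ _ h => Subgroup.closure_mono (Set.image_mono (Set.Iio_subset_Iio h))

theorem generator_mem_generatedStage_add_one (α : Ordinal.{u}) :
    generator idx α ∈ generatedStage idx (α + 1) :=
  Subgroup.subset_closure ⟨α, Set.mem_Iio.2 (Order.lt_add_one_iff.2 le_rfl), rfl⟩

variable {idx}

theorem mem_generatedStage_index_add_one (hidx : Function.Injective idx) (g : G) :
    g ∈ generatedStage idx (idx g + 1) := by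
  induction g using (InvImage.wf idx Ordinal.lt_wf).induction with
  | _ g ih =>
  by_cases hg : g ∈ generatedStage idx (idx g)
  · exact generatedStage_mono idx le_self_add hg
  have hx := leastOutside_notMem idx ⟨g, hg⟩
  have hle := index_leastOutside_le idx hg
  rw [← generator_eq] at hx hle
  -- minimality: `g` itself is the generator chosen at stage `idx g`
  have hxg : generator idx (idx g) = g := hidx <| hle.antisymm <| not_lt.1 fun hlt =>
    hx (generatedStage_mono idx (Order.add_one_le_of_lt hlt) (ih _ hlt))
  simpa [hxg] using generator_mem_generatedStage_add_one idx (idx g)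

noncomputable def ofIndex (hidx : Function.Injective idx) : OrdinalFiltration G where
  stage := generatedStage idx
  monotone := generatedStage_mono idx
  exists_mem_succ g := ⟨idx g, mem_generatedStage_index_add_one hidx g⟩
  exists_lt_mem_succ := Subgroup.exists_lt_mem_closure_image_Iio_add_one

theorem rank_ofIndex_le (hidx : Function.Injective idx) (g : G) : (ofIndex hidx).rank g ≤ idx g :=
  rank_le _ (mem_generatedStage_index_add_one hidx g)

theorem exists_notMem_generatedStage (hG : ℵ₀ < #G) (hγ : γ < (#G).ord) :
    ∃ g, g ∉ generatedStage idx γ := by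
  by_contra! h
  have himg : #(generator idx '' Set.Iio γ) ≤ γ.card := by
    have := mk_image_le_lift (f := generator idx) (s := Set.Iio γ)
    rwa [mk_Iio_ordinal, lift_lift, lift_le] at this
  have hle : #G ≤ max #(generator idx '' Set.Iio γ) ℵ₀ :=
    (mk_univ (α := G) ▸ mk_le_mk_of_subset fun g _ => h g).trans
      (Subgroup.cardinalMk_closure_le_max _)
  exact hle.not_gt (max_lt (himg.trans_lt (lt_ord.1 hγ)) hG)

theorem rank_ofIndex_generator (hidx : Function.Injective idx) (hG : ℵ₀ < #G)
    (hγ : γ < (#G).ord) : (ofIndex hidx).rank (generator idx γ) = γ := by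
  have hx : generator idx γ ∉ generatedStage idx γ :=
    generator_eq idx γ ▸ leastOutside_notMem idx (exists_notMem_generatedStage hG hγ)
  have hx1 : generator idx γ ≠ 1 := fun h1 => hx (h1 ▸ one_mem _)
  exact (rank_le _ (generator_mem_generatedStage_add_one idx γ)).antisymm
    (not_lt.1 fun hlt => hx (((ofIndex hidx).mem_stage_iff hx1).2 hlt))

theorem exists_range_rank_eq (hG : ℵ₀ < #G) :
    ∃ F : OrdinalFiltration G, Set.range F.rank = Set.Iio (#G).ord := by
  obtain ⟨r, _, hr⟩ := Cardinal.exists_ord_eq G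
  have hidx : Function.Injective (Ordinal.typein r) := Ordinal.typein_injective r
  refine ⟨ofIndex hidx, Set.Subset.antisymm ?_ fun γ hγ =>
    ⟨generator _ γ, rank_ofIndex_generator hidx hG hγ⟩⟩
  rintro _ ⟨g, rfl⟩
  exact (rank_ofIndex_le hidx g).trans_lt (hr ▸ Ordinal.typein_lt_type r g)

end OfIndex

end OrdinalFiltration

/-- Every infinite group `G` whose cardinality is a regular cardinal admits a partition
into countably many cells `A n` with `cov (A n * (A n)⁻¹) = #G` for every `n`. -/
theorem partition_cov_eq_card_of_regular {G : Type*} [Group G] [Infinite G]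
    (hreg : (#G).IsRegular) :
    ∃ A : ℕ → Set G,
      (⋃ n, A n) = Set.univ ∧
      (∀ m n, m ≠ n → Disjoint (A m) (A n)) ∧
      ∀ n, cov (A n * (A n)⁻¹) = #G := by
  rcases hreg.aleph0_le.eq_or_lt with hcount | hG
  · have : Countable G := mk_le_aleph0_iff.1 hcount.ge
    refine exists_nat_partition_cov_eq id fun t A hne hA => ?_
    rw [hne.subset_singleton_iff.1 hA, Set.inv_singleton, Set.singleton_mul_singleton,
      mul_inv_cancel, cov_one]
  · obtain ⟨F, hF⟩ := OrdinalFiltration.exists_range_rank_eq hG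
    exact exists_nat_partition_cov_eq F.color fun t A hne hA =>
      F.cov_mul_inv_eq_card hreg hG hF hne hA
end

section
/- Let $\lambda,\varkappa$ be infinite cardinals with $\lambda<\varkappa$, and let $\{H_\alpha:\alpha<\varkappa\}$ be a family of groups with $|H_\alpha|\le\lambda$ for each $\alpha<\varkappa$. Let $G$ be a subgroup of the restricted direct product (direct sum) $H=\bigotimes_{\alpha<\varkappa}H_\alpha$ with $|G|=\varkappa$. Then there exists a partition of $G$ into countably many cells $G=\bigcup_{n\in\omega}A_n$ such that $cov(A_nA_n^{-1})=\varkappa$ for each $n\in\omega$. -/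
open Cardinal Pointwise

/-- The restricted direct product (direct sum) of a family of groups: the subgroup of the
full product consisting of elements with all but finitely many coordinates the identity. -/
def restrictedProduct {ι : Type*} (H : ι → Type*) [∀ i, Group (H i)] :
    Subgroup (∀ i, H i) where
  carrier := {f | {i | f i ≠ 1}.Finite}
  one_mem' := by simp
  mul_mem' := by
    intro a b ha hb
    apply (ha.union hb).subset
    intro i hi
    by_contra h
    simp only [Set.mem_union, Set.mem_setOf_eq, not_or, not_not] at h
    exact hi (by simp [h.1, h.2])
  inv_mem' := by
    intro a ha
    apply ha.subset
    intro i hi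
    simp only [Set.mem_setOf_eq, Pi.inv_apply, ne_eq, inv_eq_one] at hi
    exact hi

/-!
The number `ℓ g` of nontrivial coordinates of `g` satisfies `ℓ (x * y⁻¹) ≤ ℓ x + ℓ y`, and the
cells are the nonempty level sets of `ℓ`, so each `A n * (A n)⁻¹` lies in a ball `{ℓ ≤ M}`. Fewer
than `κ` translates `X` of a ball never cover `G`: the supports of `X` meet fewer than `κ`
coordinates, while the subgroup of `G` trivial on a finite set has index at most `λ`, hence size
`κ`, and fewer than `κ` elements are supported inside a set of size `< κ`. This produces `g ∈ G`
with `M + 1` support points outside the supports of `X`, and then `ℓ (x⁻¹ * g) > M` for every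
`x ∈ X`.
-/

universe u

section Covering

variable {G : Type*} [Group G]

theorem cov_eq_mk_of_one_mem {A : Set G} (h1 : (1 : G) ∈ A)
    (hcov : ∀ X : Set G, X * A = Set.univ → #G ≤ #X) : cov A = #G := by
  have huniv : #G ∈ {c : Cardinal | ∃ X : Set G, #X = c ∧ X * A = Set.univ} :=
    ⟨Set.univ, mk_univ, Set.univ_mul_of_one_mem h1⟩
  refine le_antisymm (csInf_le' huniv) (le_csInf ⟨_, huniv⟩ ?_)
  rintro _ ⟨X, rfl, hX⟩
  exact hcov X hX

theorem exists_partition_cov_mul_inv_eq_mk (ℓ : G → ℕ)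
    (hℓ : ∀ x y, ℓ (x * y⁻¹) ≤ ℓ x + ℓ y) (hG : 1 < #G)
    (hball : ∀ (M : ℕ) (X : Set G), X * {g | ℓ g ≤ M} = Set.univ → #G ≤ #X) :
    ∃ A : ℕ → Set G,
      (⋃ n, A n) = Set.univ ∧
      (∀ m n, m ≠ n → Disjoint (A m) (A n)) ∧
      ∀ n, cov (A n * (A n)⁻¹) = #G := by
  have hinf : (Set.range ℓ).Infinite := by
    intro hfin
    obtain ⟨M, hM⟩ := hfin.bddAbove
    have hcover : {(1 : G)} * {g | ℓ g ≤ M} = Set.univ := by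
      rw [Set.singleton_one, one_mul, Set.eq_univ_iff_forall]
      exact fun g => hM (Set.mem_range_self g)
    exact (hball M _ hcover).not_gt (by simpa using hG)
  set v := Nat.nth (· ∈ Set.range ℓ)
  refine ⟨fun n => ℓ ⁻¹' {v n}, ?_, ?_, fun n => ?_⟩
  · refine Set.eq_univ_of_forall fun g => Set.mem_iUnion.2 ?_
    obtain ⟨n, hn⟩ : ℓ g ∈ Set.range v := Nat.subset_range_nth (Set.mem_range_self g)
    exact ⟨n, hn.symm⟩
  · intro m n hmn
    exact (Set.disjoint_singleton.2 ((Nat.nth_injective hinf).ne hmn)).preimage ℓ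
  · obtain ⟨g, hg⟩ : v n ∈ Set.range ℓ := Nat.nth_mem_of_infinite hinf n
    have hsub : ℓ ⁻¹' {v n} * (ℓ ⁻¹' {v n})⁻¹ ⊆ {g | ℓ g ≤ 2 * v n} := by
      rintro _ ⟨x, hx, y, hy, rfl⟩
      have := hℓ x y⁻¹
      simp only [inv_inv, Set.mem_preimage, Set.mem_singleton_iff, Set.mem_inv] at this hx hy
      simp only [Set.mem_ofPred_eq]
      omega
    refine cov_eq_mk_of_one_mem ⟨g, hg, g⁻¹, by simpa using hg, mul_inv_cancel g⟩
      fun X hX => hball (2 * v n) X (Set.eq_univ_of_univ_subset ?_)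
    exact hX.symm.subset.trans (Set.mul_subset_mul_left hsub)

end Covering

theorem Cardinal.mk_eq_mk_range_mul_mk_ker {G K : Type u} [Group G] [Group K] (φ : G →* K) :
    #G = #φ.range * #φ.ker := by
  rw [mk_congr (Subgroup.groupEquivQuotientProdSubgroup (s := φ.ker)), mk_prod, lift_id, lift_id,
    mk_congr (QuotientGroup.quotientKerEquivRange φ).toEquiv]

theorem Cardinal.mk_pi_le_of_finite {α : Type u} [Finite α] {β : α → Type u}
    {lam : Cardinal.{u}} (hlam : ℵ₀ ≤ lam) (hβ : ∀ a, #(β a) ≤ lam) : #(∀ a, β a) ≤ lam :=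
  calc #(∀ a, β a) ≤ lam ^ #α := by
        rw [mk_pi, ← prod_const']; exact prod_le_prod _ _ hβ
    _ ≤ lam := pow_le hlam (lt_aleph0_of_finite α)

namespace restrictedProduct

variable {ι : Type u} {H : ι → Type u} [∀ i, Group (H i)]

noncomputable def support (f : restrictedProduct H) : Finset ι :=
  Set.Finite.toFinset (s := {i | (f : ∀ i, H i) i ≠ 1}) f.2

@[simp]
theorem mem_support {f : restrictedProduct H} {i : ι} :
    i ∈ support f ↔ (f : ∀ i, H i) i ≠ 1 :=
  Set.Finite.mem_toFinset _

theorem card_support_mul_inv_le (f f' : restrictedProduct H) :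
    (support (f * f'⁻¹)).card ≤ (support f).card + (support f').card := by
  classical
  refine (Finset.card_le_card fun i hi => ?_).trans (Finset.card_union_le _ _)
  contrapose! hi
  simp_all

def restrictHom (D : Finset ι) : restrictedProduct H →* ∀ i : D, H i :=
  (MonoidHom.pi fun i : D => Pi.evalMonoidHom H (i : ι)).comp (restrictedProduct H).subtype

theorem restrictHom_eq_one_iff {D : Finset ι} {f : restrictedProduct H} :
    restrictHom D f = 1 ↔ ∀ i ∈ D, (f : ∀ i, H i) i = 1 := by
  simp [restrictHom, funext_iff]

variable {lam kap : Cardinal.{u}}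

theorem mk_setOf_support_subset_finset_le (hlam : ℵ₀ ≤ lam) (hH : ∀ i, #(H i) ≤ lam)
    (D : Finset ι) : #{f : restrictedProduct H | support f ⊆ D} ≤ lam := by
  refine (mk_le_of_injective (f := fun f : {f : restrictedProduct H | support f ⊆ D} =>
    restrictHom D f.1) ?_).trans (mk_pi_le_of_finite hlam fun i : D => hH i)
  rintro ⟨f, hf⟩ ⟨f', hf'⟩ h
  ext i
  by_cases hi : i ∈ D
  · exact congrFun h ⟨i, hi⟩
  · have hfi := mt (@hf i) hi
    have hfi' := mt (@hf' i) hi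
    simp_all

theorem mk_setOf_support_subset_lt (hlam : ℵ₀ ≤ lam) (hlt : lam < kap)
    (hH : ∀ i, #(H i) ≤ lam) {C : Set ι} (hC : #C < kap) :
    #{f : restrictedProduct H | ↑(support f) ⊆ C} < kap := by
  classical
  have hkap : ℵ₀ ≤ kap := hlam.trans hlt.le
  have hfin : #(Finset C) < kap := by
    rcases finite_or_infinite C with hC' | hC'
    · exact (lt_aleph0_of_finite _).trans_le hkap
    · rwa [mk_finset_of_infinite]
  calc #{f : restrictedProduct H | ↑(support f) ⊆ C}
      ≤ #(⋃ D : Finset C,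
          {f : restrictedProduct H | support f ⊆ D.map (Function.Embedding.subtype _)}) := by
        refine mk_le_mk_of_subset fun f hf =>
          Set.mem_iUnion.2 ⟨(support f).subtype (· ∈ C), ?_⟩
        rw [Set.mem_ofPred_eq, Finset.subtype_map, Finset.filter_true_of_mem fun i hi => hf hi]
    _ ≤ #(Finset C) * lam :=
        mk_iUnion_le_sum_mk.trans ((sum_le_sum _ _ fun D =>
          mk_setOf_support_subset_finset_le hlam hH _).trans_eq (sum_const' _ _))
    _ < kap := mul_lt_of_lt hkap hfin hlt

theorem exists_restrictHom_eq_one_not_support_subset (hlam : ℵ₀ ≤ lam) (hlt : lam < kap)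
    (hH : ∀ i, #(H i) ≤ lam) {G : Subgroup (restrictedProduct H)} (hG : #G = kap)
    (D : Finset ι) {C : Set ι} (hC : #C < kap) :
    ∃ g : G, restrictHom D (g : restrictedProduct H) = 1 ∧
      ¬ ↑(support (g : restrictedProduct H)) ⊆ C := by
  by_contra! hcon
  set φ := (restrictHom D).comp G.subtype
  have hker : #φ.ker < kap := by
    refine lt_of_le_of_lt (mk_le_of_injective (f := fun g : φ.ker =>
      (⟨g.1.1, hcon g.1 g.2⟩ : {f : restrictedProduct H | ↑(support f) ⊆ C})) ?_)
      (mk_setOf_support_subset_lt hlam hlt hH hC)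
    intro a b h
    simp only [Subtype.mk.injEq] at h
    exact Subtype.ext (Subtype.ext h)
  have hrange : #φ.range < kap :=
    ((mk_subtype_le _).trans (mk_pi_le_of_finite hlam fun i : D => hH i)).trans_lt hlt
  exact (hG ▸ mk_eq_mk_range_mul_mk_ker φ ▸ mul_lt_of_lt (hlam.trans hlt.le) hrange hker).false

/-- Each step multiplies by an element that is trivial on the support built so far and has a new
support point outside `C`, so the supports add up. -/
theorem exists_card_eq_subset_support_diff (hlam : ℵ₀ ≤ lam) (hlt : lam < kap)
    (hH : ∀ i, #(H i) ≤ lam) {G : Subgroup (restrictedProduct H)} (hG : #G = kap)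
    {C : Set ι} (hC : #C < kap) (m : ℕ) :
    ∃ (g : G) (T : Finset ι), T.card = m ∧ ↑T ⊆ ↑(support (g : restrictedProduct H)) \ C := by
  classical
  induction m with
  | zero => exact ⟨1, ∅, rfl, by simp⟩
  | succ m ih =>
    obtain ⟨g, T, hT, hTg⟩ := ih
    have hkap : ℵ₀ ≤ kap := hlam.trans hlt.le
    have hC' : #(C ∪ ↑(support (g : restrictedProduct H)) : Set ι) < kap :=
      (mk_union_le _ _).trans_lt (add_lt_of_lt hkap hC ((lt_aleph0_of_finite _).trans_le hkap))
    obtain ⟨h, hh, hhC⟩ := exists_restrictHom_eq_one_not_support_subset hlam hlt hH hG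
      (support (g : restrictedProduct H)) hC'
    obtain ⟨j, hjh, hjC⟩ := Set.not_subset.1 hhC
    rw [restrictHom_eq_one_iff] at hh
    simp only [Set.mem_union, not_or, Finset.mem_coe, mem_support, ne_eq, not_not] at hjh hjC
    refine ⟨g * h, insert j T, ?_, ?_⟩
    · rw [Finset.card_insert_of_notMem fun hjT => mem_support.1 (hTg hjT).1 hjC.2, hT]
    · intro i hi
      rcases Finset.mem_insert.1 hi with rfl | hiT
      · simp [hjC, hjh]
      · obtain ⟨hig, hiC⟩ := hTg hiT
        simp_all

theorem mk_iUnion_support_lt (hkap : ℵ₀ < kap) {X : Set (restrictedProduct H)}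
    (hX : #X < kap) : #(⋃ x : X, (support (x : restrictedProduct H) : Set ι)) < kap :=
  calc #(⋃ x : X, (support (x : restrictedProduct H) : Set ι))
      ≤ #X * ℵ₀ := mk_iUnion_le_sum_mk.trans
        ((sum_le_sum _ _ fun _ => (lt_aleph0_of_finite _).le).trans_eq (sum_const' _ _))
    _ < kap := mul_lt_of_lt hkap.le hX hkap

theorem le_mk_of_mul_setOf_card_support_le_eq_univ (hlam : ℵ₀ ≤ lam) (hlt : lam < kap)
    (hH : ∀ i, #(H i) ≤ lam) {G : Subgroup (restrictedProduct H)} (hG : #G = kap) (M : ℕ)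
    {X : Set G} (hX : X * {g : G | (support (g : restrictedProduct H)).card ≤ M} = Set.univ) :
    kap ≤ #X := by
  by_contra! hXlt
  have hC := mk_iUnion_support_lt (hlam.trans_lt hlt)
    ((mk_image_le (f := ((↑) : G → restrictedProduct H)) (s := X)).trans_lt hXlt)
  obtain ⟨g, T, hT, hTg⟩ := exists_card_eq_subset_support_diff hlam hlt hH hG hC (M + 1)
  obtain ⟨x, hx, s, hs, rfl⟩ : g ∈ X * _ := hX ▸ Set.mem_univ g
  have hTs : T ⊆ support (s : restrictedProduct H) := by
    intro i hi
    obtain ⟨hixs, hiC⟩ := hTg hi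
    have hxi : ((x : restrictedProduct H) : ∀ i, H i) i = 1 := by
      by_contra hxi
      exact hiC (Set.mem_iUnion.2 ⟨⟨x, x, hx, rfl⟩, mem_support.2 hxi⟩)
    simp_all
  have := Finset.card_le_card hTs
  simp only [Set.mem_ofPred_eq] at hs
  omega

end restrictedProduct

theorem partition_cov_eq_card_subgroup_restricted_product_general {ι : Type u} (H : ι → Type u)
    [∀ i, Group (H i)] (lam kap : Cardinal.{u})
    (hlam : ℵ₀ ≤ lam) (hlt : lam < kap)
    (hH : ∀ i, #(H i) ≤ lam)
    (G : Subgroup ↥(restrictedProduct H)) (hG : #G = kap) :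
    ∃ A : ℕ → Set G,
      (⋃ n, A n) = Set.univ ∧
      (∀ m n, m ≠ n → Disjoint (A m) (A n)) ∧
      ∀ n, cov (A n * (A n)⁻¹) = kap := by
  subst hG
  refine exists_partition_cov_mul_inv_eq_mk
    (fun g => (restrictedProduct.support (g : restrictedProduct H)).card) (fun x y => ?_)
    (one_lt_aleph0.trans_le (hlam.trans hlt.le)) fun M X hX =>
      restrictedProduct.le_mk_of_mul_setOf_card_support_le_eq_univ hlam hlt hH rfl M hX
  simpa only [Subgroup.coe_mul, Subgroup.coe_inv] using
    restrictedProduct.card_support_mul_inv_le (x : restrictedProduct H) y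

/-- If `λ < κ` are infinite cardinals, `{H α : α < κ}` is a family of groups each of
cardinality `≤ λ`, and `G` is a subgroup of the restricted direct product of the `H α`
with `|G| = κ`, then `G` admits a partition into countably many cells `A n` with
`cov (A n * (A n)⁻¹) = κ` for every `n`. -/
theorem partition_cov_eq_card_subgroup_restricted_product {ι : Type u} (H : ι → Type u)
    [∀ i, Group (H i)] (lam kap : Cardinal.{u})
    (hlam : ℵ₀ ≤ lam) (hkap : ℵ₀ ≤ kap) (hlt : lam < kap)
    (hι : #ι = kap) (hH : ∀ i, #(H i) ≤ lam)
    (G : Subgroup ↥(restrictedProduct H)) (hG : #G = kap) :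
    ∃ A : ℕ → Set G,
      (⋃ n, A n) = Set.univ ∧
      (∀ m n, m ≠ n → Disjoint (A m) (A n)) ∧
      ∀ n, cov (A n * (A n)⁻¹) = kap :=
  partition_cov_eq_card_subgroup_restricted_product_general H lam kap hlam hlt hH G hG
end

section
/- Every infinite Abelian group $G$ of cardinality $\varkappa$ can be partitioned into countably many cells $G=\bigcup_{n\in\omega}A_n$ such that $cov(A_n-A_n)=\varkappa$ for each $n\in\omega$. -/
/-!
The cells are the fibres of a function `ℓ : G → ℕ`, made surjective by hand, whose sublevel sets
`L m = {ℓ ≤ m}` are such that fewer than `#G` translates of `L m - L m` never cover `G`.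

If `G` is a countable union of smaller sets, let `ℓ x` be the first of them containing `x`; then
`L m - L m` is itself smaller than `G`. Otherwise `#G` is uncountable and countable unions of
smaller sets are smaller. Then either some `G/pG` has full size and is a `ZMod p`-vector space, or
the subgroup `K` generated by representatives of all the `G/pG` is small and `G/K` is a divisible
group of full size. A vector space over a countable field, and a divisible group (by Zorn, since
divisible groups are injective), is a direct sum of countable nontrivial subgroups, and there
`ℓ x = #(supp x)` works: `supp (a - b)` has at most `2m` elements for `a, b ∈ L m`, while for fewer
than `#G` elements `x` some `g` has `2m + 1` nonzero coordinates outside every `supp x`, so that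
`g - x ∉ L m - L m`. Such an `ℓ` pulls back along surjections onto groups of the same size.
-/

open Cardinal Pointwise

noncomputable def covAdd {G : Type*} [AddGroup G] (A : Set G) : Cardinal :=
  sInf {c : Cardinal | ∃ X : Set G, #X = c ∧ X + A = Set.univ}

universe u

open Set

section CovMax

variable {G K : Type u}

/-- `#G ≤ covAdd B`, stated so that it is not spoiled by `covAdd ∅ = sInf ∅ = 0`. -/
def IsCovMax [Add G] (B : Set G) : Prop :=
  ∀ X : Set G, X + B = Set.univ → #G ≤ #X

def IsCovMaxLevel [AddGroup G] (ℓ : G → ℕ) : Prop :=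
  ∀ m, IsCovMax ({x | ℓ x ≤ m} - {x | ℓ x ≤ m})

theorem IsCovMax.mono [Add G] {B B' : Set G} (h : IsCovMax B') (hB : B ⊆ B') : IsCovMax B :=
  fun X hX => h X (eq_univ_of_univ_subset (hX ▸ add_subset_add_left hB))

theorem isCovMax_of_mk_lt [Add G] [Infinite G] {B : Set G} (hB : #B < #G) : IsCovMax B := by
  intro X hX
  by_contra! hXG
  have := (mk_add_le (s := X) (t := B)).trans_lt (mul_lt_of_lt (aleph0_le_mk G) hXG hB)
  rw [hX, mk_univ] at this
  exact this.false

theorem covAdd_eq_mk_of_isCovMax [AddGroup G] {B : Set G} (hB : B.Nonempty) (h : IsCovMax B) :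
    covAdd B = #G := by
  have huniv : (Set.univ : Set G) + B = Set.univ := Set.univ_add hB
  refine le_antisymm (csInf_le' ⟨Set.univ, mk_univ, huniv⟩) (le_csInf ⟨_, Set.univ, rfl, huniv⟩ ?_)
  rintro _ ⟨X, rfl, hX⟩
  exact h X hX

theorem IsCovMax.preimage [AddGroup G] [AddGroup K] {φ : G →+ K} (hφ : Function.Surjective φ)
    (hcard : #G ≤ #K) {B : Set K} (h : IsCovMax B) : IsCovMax (φ ⁻¹' B) := by
  intro X hX
  refine hcard.trans ((h (φ '' X) (eq_univ_of_forall fun k => ?_)).trans mk_image_le)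
  obtain ⟨g, rfl⟩ := hφ k
  obtain ⟨x, hx, b, hb, rfl⟩ := hX ▸ mem_univ g
  exact ⟨φ x, mem_image_of_mem φ hx, φ b, hb, (map_add φ x b).symm⟩

theorem IsCovMaxLevel.comp [AddGroup G] [AddGroup K] {ℓ : K → ℕ} (hℓ : IsCovMaxLevel ℓ)
    {φ : G →+ K} (hφ : Function.Surjective φ) (hcard : #G ≤ #K) : IsCovMaxLevel (ℓ ∘ φ) :=
  fun m => ((hℓ m).preimage hφ hcard).mono (preimage_sub_preimage_subset φ (s := {x | ℓ x ≤ m})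
    (t := {x | ℓ x ≤ m}))

theorem exists_partition_of_isCovMaxLevel [AddGroup G] [Infinite G] {ℓ : G → ℕ}
    (hℓ : IsCovMaxLevel ℓ) :
    ∃ A : ℕ → Set G, (⋃ n, A n) = Set.univ ∧ (∀ m n, m ≠ n → Disjoint (A m) (A n)) ∧
      ∀ n, covAdd (A n - A n) = #G := by
  let u := Infinite.natEmbedding G
  -- `f` agrees with `ℓ` off a copy of `ℕ` on which it is the identity, so every fibre is nonempty
  let f : G → ℕ := Function.extend u id ℓ
  have hfu : ∀ n, f (u n) = n := fun n => u.injective.extend_apply _ _ n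
  refine ⟨fun n => f ⁻¹' {n}, by rw [← preimage_iUnion, iUnion_of_singleton, preimage_univ],
    fun m n hmn => (disjoint_singleton.2 hmn).preimage f, fun n => ?_⟩
  have hfib : f ⁻¹' {n} ⊆ {x | ℓ x ≤ max n (ℓ (u n))} := by
    intro x (hx : f x = n)
    by_cases hxu : ∃ k, u k = x
    · obtain ⟨k, rfl⟩ := hxu
      rw [hfu] at hx
      exact hx ▸ le_max_right k (ℓ (u k))
    · have : ℓ x = n := (Function.extend_apply' _ _ _ hxu).symm.trans hx
      exact this.le.trans (le_max_left _ _)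
  have hun : u n ∈ f ⁻¹' {n} := hfu n
  exact covAdd_eq_mk_of_isCovMax ⟨_, sub_mem_sub hun hun⟩ ((hℓ _).mono (sub_subset_sub hfib hfib))

theorem mk_accumulate_lt [Infinite G] {B : ℕ → Set G} (hB : ∀ n, #(B n) < #G) (n : ℕ) :
    #(accumulate B n) < #G := by
  induction n with
  | zero => simpa using hB 0
  | succ n ih =>
    rw [accumulate_succ]
    exact (mk_union_le _ _).trans_lt (add_lt_of_lt (aleph0_le_mk G) ih (hB _))

theorem exists_isCovMaxLevel_of_iUnion_eq_univ [AddGroup G] [Infinite G] {B : ℕ → Set G}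
    (hB : ⋃ n, B n = Set.univ) (hBc : ∀ n, #(B n) < #G) : ∃ ℓ : G → ℕ, IsCovMaxLevel ℓ := by
  classical
  have hmem : ∀ x, ∃ n, x ∈ B n := fun x => mem_iUnion.1 (hB ▸ mem_univ x)
  refine ⟨fun x => Nat.find (hmem x), fun m => isCovMax_of_mk_lt ?_⟩
  have hsub : {x | Nat.find (hmem x) ≤ m} ⊆ accumulate B m :=
    fun x hx => mem_accumulate.2 ⟨_, hx, Nat.find_spec (hmem x)⟩
  have hacc := mk_accumulate_lt hBc m
  calc #↥({x | Nat.find (hmem x) ≤ m} - {x | Nat.find (hmem x) ≤ m})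
      _ ≤ #(accumulate B m) * #(accumulate B m) :=
        mk_sub_le.trans (mul_le_mul' (mk_le_mk_of_subset hsub) (mk_le_mk_of_subset hsub))
      _ < #G := mul_lt_of_lt (aleph0_le_mk G) hacc hacc

end CovMax

section DirectSum

variable {ι : Type u} {β : ι → Type u} [∀ i, AddCommGroup (β i)]

theorem mk_dfinsupp_le [∀ i, Countable (β i)] : #(Π₀ i, β i) ≤ max #ι ℵ₀ := by
  classical
  have hsurj : Function.Surjective fun l : List (Σ i, β i) =>
      (l.map fun p => DFinsupp.single p.1 p.2).sum := by
    intro y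
    refine ⟨y.support.toList.map fun i => ⟨i, y i⟩, ?_⟩
    simp only [List.map_map, Function.comp_def, Finset.sum_map_toList]
    exact DFinsupp.sum_single
  have hsigma : #(Σ i, β i) ≤ #ι * ℵ₀ := by
    rw [mk_sigma, ← sum_const']
    exact sum_le_sum _ _ fun i => mk_le_aleph0
  calc #(Π₀ i, β i) ≤ #(List (Σ i, β i)) := mk_le_of_surjective hsurj
    _ ≤ max ℵ₀ (#ι * ℵ₀) := (mk_list_le_max _).trans (max_le_max le_rfl hsigma)
    _ ≤ max #ι ℵ₀ := by
      refine max_le (le_max_right _ _) (mul_le_max_of_aleph0_le_right le_rfl |>.trans ?_)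
      simp

variable [DecidableEq ι] [∀ i (x : β i), Decidable (x ≠ 0)]

theorem exists_forall_lt_card_support_sub [∀ i, Countable (β i)] [∀ i, Nontrivial (β i)]
    (hℵ : ℵ₀ < #(Π₀ i, β i)) (N : ℕ) {X : Set (Π₀ i, β i)} (hX : #X < #(Π₀ i, β i)) :
    ∃ g : Π₀ i, β i, ∀ x ∈ X, N < (g - x).support.card := by
  set U : Set ι := ⋃ x ∈ X, (x.support : Set ι)
  have hU : #U < #(Π₀ i, β i) := by
    refine (mk_biUnion_le _ _).trans_lt (mul_lt_of_lt hℵ.le hX (lt_of_le_of_lt ?_ hℵ))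
    exact ciSup_le' fun x => (Finset.finite_toSet _).lt_aleph0.le
  have hUc : Uᶜ.Infinite := by
    intro hfin
    have hι : #ι < #(Π₀ i, β i) := by
      rw [← mk_univ, ← union_compl_self U]
      exact (mk_union_le _ _).trans_lt (add_lt_of_lt hℵ.le hU (hfin.lt_aleph0.trans hℵ))
    exact (mk_dfinsupp_le.trans_lt (max_lt hι hℵ)).false
  -- `g` is nonzero exactly on `N + 1` coordinates lying outside the supports of all `x ∈ X`
  obtain ⟨J, hJU, hJ⟩ := hUc.exists_subset_card_eq (N + 1)
  choose c hc using fun i => exists_ne (0 : β i)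
  refine ⟨DFinsupp.mk J fun i => c i, fun x hx => ?_⟩
  have hJsupp : J ⊆ (DFinsupp.mk J (fun i => c i) - x).support := by
    intro j hj
    have hxj : x j = 0 := DFinsupp.notMem_support_iff.1 fun h => hJU hj (mem_biUnion hx h)
    rw [DFinsupp.mem_support_iff, DFinsupp.sub_apply, DFinsupp.mk_apply, dif_pos hj, hxj, sub_zero]
    exact hc j
  exact Nat.lt_of_lt_of_le (hJ ▸ Nat.lt_succ_self N) (Finset.card_le_card hJsupp)

theorem isCovMaxLevel_card_support [∀ i, Countable (β i)] [∀ i, Nontrivial (β i)]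
    (hℵ : ℵ₀ < #(Π₀ i, β i)) : IsCovMaxLevel fun y : Π₀ i, β i => y.support.card := by
  intro m X hX
  by_contra! hXlt
  obtain ⟨g, hg⟩ := exists_forall_lt_card_support_sub hℵ (m + m) hXlt
  obtain ⟨x, hx, _, ⟨a, ha, b, hb, rfl⟩, hxab⟩ := hX ▸ mem_univ g
  have hsupp : (g - x).support ⊆ a.support ∪ b.support := by
    rw [← hxab, show x + (a - b) - x = a + -b by abel, ← DFinsupp.support_neg (f := b)]
    exact DFinsupp.support_add
  have := (hg x hx).trans_le ((Finset.card_le_card hsupp).trans (Finset.card_union_le _ _))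
  have ha' : a.support.card ≤ m := ha
  have hb' : b.support.card ≤ m := hb
  omega

end DirectSum

theorem exists_isCovMaxLevel_of_isInternal {R : Type*} [Ring R] {M ι : Type u} [AddCommGroup M]
    [Module R M] [DecidableEq ι] {C : ι → Submodule R M} (hC : DirectSum.IsInternal C)
    [∀ i, Countable (C i)] [∀ i, Nontrivial (C i)] (hℵ : ℵ₀ < #M) :
    ∃ ℓ : M → ℕ, IsCovMaxLevel ℓ := by
  classical
  let e : M ≃ₗ[R] Π₀ i, C i := (LinearEquiv.ofBijective (DirectSum.coeLinearMap C) hC).symm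
  have hcard : #M = #(Π₀ i, C i) := mk_congr e.toEquiv
  exact ⟨_, (isCovMaxLevel_card_support (hcard ▸ hℵ)).comp (φ := e.toLinearMap.toAddMonoidHom)
    e.surjective hcard.le⟩

theorem exists_isCovMaxLevel_of_module {K : Type*} {V : Type u} [DivisionRing K] [Countable K]
    [AddCommGroup V] [Module K V] (hℵ : ℵ₀ < #V) : ∃ ℓ : V → ℕ, IsCovMaxLevel ℓ := by
  classical
  let b := Module.Basis.ofVectorSpace K V
  have hC : DirectSum.IsInternal fun i => K ∙ b i :=
    DirectSum.isInternal_submodule_of_iSupIndep_of_iSup_eq_top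
      b.linearIndependent.iSupIndep_span_singleton
      (by rw [← Submodule.span_range_eq_iSup, b.span_eq])
  have : ∀ i, Countable (K ∙ b i) := fun i => by
    refine ((countable_range fun k : K => k • b i).mono fun x hx => ?_).to_subtype
    exact Submodule.mem_span_singleton.1 hx
  have : ∀ i, Nontrivial (K ∙ b i) := fun i =>
    (Submodule.nontrivial_iff_ne_bot).2 ((Submodule.span_singleton_eq_bot).not.2 (b.ne_zero i))
  exact exists_isCovMaxLevel_of_isInternal hC hℵ

theorem sSupIndep.insert_of_disjoint {α : Type*} [CompleteLattice α] [IsModularLattice α]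
    {s : Set α} {a : α} (hs : sSupIndep s) (ha : Disjoint a (sSup s)) : sSupIndep (insert a s) := by
  intro x hx
  by_cases hxa : x = a
  · subst hxa
    exact ha.mono_right (sSup_le_sSup fun y hy => hy.1.resolve_left hy.2)
  · have hxs : x ∈ s := hx.resolve_left hxa
    rw [insert_sdiff_of_notMem _ (mt mem_singleton_iff.1 (Ne.symm hxa)), sSup_insert, sup_comm]
    exact (hs hxs).disjoint_sup_right_of_disjoint_sup_left
      (ha.symm.mono_left (sup_le (le_sSup hxs) (sSup_le_sSup sdiff_subset)))

theorem mk_span_int_le {M : Type u} [AddCommGroup M] (S : Set M) :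
    #(Submodule.span ℤ S) ≤ max #S ℵ₀ := by
  rw [← Subtype.range_coe (s := S), ← Finsupp.range_linearCombination]
  change #(LinearMap.range (Finsupp.linearCombination ℤ ((↑) : S → M)) : Set M) ≤ _
  rw [LinearMap.coe_range]
  refine mk_range_le.trans ?_
  rcases isEmpty_or_nonempty S with hS | hS
  · simp
  · simp [mk_finsupp_lift_of_infinite']

section Divisible

variable {D : Type u} [AddCommGroup D]

def Submodule.IsDivisible (C : Submodule ℤ D) : Prop :=
  ∀ n : ℤ, n ≠ 0 → ∀ y ∈ C, ∃ z ∈ C, n • z = y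

theorem Submodule.isDivisible_sSup {𝒮 : Set (Submodule ℤ D)} (h : ∀ C ∈ 𝒮, C.IsDivisible) :
    (sSup 𝒮).IsDivisible := by
  intro n hn y hy
  rw [sSup_eq_iSup'] at hy
  induction hy using Submodule.iSup_induction' with
  | mem C y hy =>
    obtain ⟨z, hz, rfl⟩ := h C C.2 n hn y hy
    exact ⟨z, le_sSup C.2 hz, rfl⟩
  | zero => exact ⟨0, zero_mem _, smul_zero n⟩
  | add y y' _ _ hy hy' =>
    obtain ⟨z, hz, rfl⟩ := hy
    obtain ⟨z', hz', rfl⟩ := hy'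
    exact ⟨z + z', add_mem hz hz', smul_add n z z'⟩

theorem Submodule.IsDivisible.exists_countable_le {W : Submodule ℤ D} (hW : W.IsDivisible) {e : D}
    (he : e ∈ W) : ∃ C ≤ W, Countable C ∧ C.IsDivisible ∧ e ∈ C := by
  choose! r hrW hr using hW
  let step : Set D → Set D := fun s => s ∪ image2 r {n | n ≠ 0} s
  let T : Set D := ⋃ k, step^[k] {e}
  have hT : ∀ k, step^[k] {e} ⊆ W ∧ (step^[k] {e}).Countable := by
    intro k
    induction k with
    | zero => simpa using he
    | succ k ih =>
      rw [Function.iterate_succ_apply']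
      refine ⟨union_subset ih.1 ?_, ih.2.union ((to_countable _).image2 ih.2 _)⟩
      rintro _ ⟨n, hn, y, hy, rfl⟩
      exact hrW n hn y (ih.1 hy)
  have hTW : T ⊆ W := iUnion_subset fun k => (hT k).1
  refine ⟨Submodule.span ℤ T, Submodule.span_le.2 hTW, ?_, ?_, Submodule.subset_span
    (mem_iUnion_of_mem 0 (mem_singleton e))⟩
  · have := (mk_span_int_le T).trans (max_le (countable_iUnion fun k => (hT k).2).le_aleph0 le_rfl)
    exact mk_le_aleph0_iff.1 this
  · intro n hn y hy
    induction hy using Submodule.span_induction with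
    | mem y hy =>
      obtain ⟨k, hk⟩ := mem_iUnion.1 hy
      refine ⟨r n y, Submodule.subset_span (mem_iUnion_of_mem (k + 1) ?_), hr n hn y (hTW hy)⟩
      rw [Function.iterate_succ_apply']
      exact Or.inr (mem_image2_of_mem hn hk)
    | zero => exact ⟨0, zero_mem _, smul_zero n⟩
    | add y y' _ _ hy hy' =>
      obtain ⟨z, hz, rfl⟩ := hy
      obtain ⟨z', hz', rfl⟩ := hy'
      exact ⟨z + z', add_mem hz hz', smul_add n z z'⟩
    | smul a y _ hy =>
      obtain ⟨z, hz, rfl⟩ := hy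
      exact ⟨a • z, Submodule.smul_mem _ a hz, smul_comm n a z⟩

theorem Submodule.IsDivisible.exists_retraction {S : Submodule ℤ D} (hS : S.IsDivisible) :
    ∃ q : D →ₗ[ℤ] S, q ∘ₗ S.subtype = LinearMap.id := by
  let _ : DivisibleBy S ℤ := divisibleByOfSMulRightSurj _ _ fun {n} hn y => by
    obtain ⟨z, hz, hzy⟩ := hS n hn y y.2
    exact ⟨⟨z, hz⟩, Subtype.ext hzy⟩
  exact (Module.Baer.of_divisible S).extension_property S.subtype S.injective_subtype _

theorem Submodule.IsDivisible.exists_isDivisible_disjoint [DivisibleBy D ℤ] {S : Submodule ℤ D}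
    (hS : S.IsDivisible) (hne : S ≠ ⊤) :
    ∃ W : Submodule ℤ D, W.IsDivisible ∧ W ≠ ⊥ ∧ Disjoint S W := by
  obtain ⟨q, hq⟩ := hS.exists_retraction
  have hqS : ∀ x : S, q x = x := fun x => LinearMap.congr_fun hq x
  have hqq : ∀ x, q (x - q x) = 0 := fun x => by rw [map_sub, hqS, sub_self]
  obtain ⟨x₀, -, hx₀⟩ := SetLike.exists_of_lt (lt_top_iff_ne_top.2 hne)
  refine ⟨LinearMap.ker q, fun n hn y hy => ?_, ?_, ?_⟩
  · obtain ⟨z, rfl⟩ := DivisibleBy.surjective_smul D ℤ hn y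
    refine ⟨z - q z, hqq z, ?_⟩
    rw [smul_sub, ← Submodule.coe_smul, ← map_smul, LinearMap.mem_ker.1 hy, ZeroMemClass.coe_zero,
      sub_zero]
  · refine (Submodule.ne_bot_iff _).2 ⟨x₀ - q x₀, hqq x₀, fun h => hx₀ ?_⟩
    rw [sub_eq_zero.1 h]
    exact (q x₀).2
  · refine Submodule.disjoint_def.2 fun x hxS hxq => ?_
    exact congrArg Subtype.val ((hqS ⟨x, hxS⟩).symm.trans (LinearMap.mem_ker.1 hxq))

theorem exists_isInternal_countable_of_divisible [DivisibleBy D ℤ] :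
    ∃ 𝒮 : Set (Submodule ℤ D), DirectSum.IsInternal (fun C : 𝒮 => (C : Submodule ℤ D)) ∧
      ∀ C ∈ 𝒮, Countable C ∧ C ≠ ⊥ := by
  classical
  let P : Set (Submodule ℤ D) := {C | Countable C ∧ C.IsDivisible ∧ C ≠ ⊥}
  obtain ⟨𝒮, h𝒮⟩ := zorn_subset {𝒮 | 𝒮 ⊆ P ∧ sSupIndep 𝒮} fun c hc hchain =>
    ⟨⋃₀ c, ⟨sUnion_subset fun s hs => (hc hs).1,
      iSupIndep_sUnion_of_directed hchain.directedOn fun s hs => (hc hs).2⟩,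
      fun _ => subset_sUnion_of_mem⟩
  have htop : sSup 𝒮 = ⊤ := by
    by_contra hne
    obtain ⟨W, hWd, hWne, hdisj⟩ :=
      (Submodule.isDivisible_sSup fun C hC => (h𝒮.prop.1 hC).2.1).exists_isDivisible_disjoint hne
    obtain ⟨e, he, he0⟩ := (Submodule.ne_bot_iff W).1 hWne
    obtain ⟨C, hCW, hCc, hCd, heC⟩ := hWd.exists_countable_le he
    have hCne : C ≠ ⊥ := (Submodule.ne_bot_iff C).2 ⟨e, heC, he0⟩
    have hdisjC : Disjoint C (sSup 𝒮) := (hdisj.mono_right hCW).symm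
    have hC𝒮 : C ∈ 𝒮 := h𝒮.mem_of_prop_insert
      ⟨insert_subset ⟨hCc, hCd, hCne⟩ h𝒮.prop.1, h𝒮.prop.2.insert_of_disjoint hdisjC⟩
    exact hCne (hdisjC.eq_bot_of_le (le_sSup hC𝒮))
  refine ⟨𝒮, DirectSum.isInternal_submodule_of_iSupIndep_of_iSup_eq_top
    ((sSupIndep_iff 𝒮).1 h𝒮.prop.2) (by rwa [← sSup_eq_iSup']), fun C hC => ?_⟩
  exact ⟨(h𝒮.prop.1 hC).1, (h𝒮.prop.1 hC).2.2⟩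

theorem exists_isCovMaxLevel_of_divisible [DivisibleBy D ℤ] (hℵ : ℵ₀ < #D) :
    ∃ ℓ : D → ℕ, IsCovMaxLevel ℓ := by
  classical
  obtain ⟨𝒮, hint, h𝒮⟩ := exists_isInternal_countable_of_divisible (D := D)
  have : ∀ C : 𝒮, Countable (C : Submodule ℤ D) := fun C => (h𝒮 C C.2).1
  have : ∀ C : 𝒮, Nontrivial (C : Submodule ℤ D) :=
    fun C => Submodule.nontrivial_iff_ne_bot.2 (h𝒮 C C.2).2
  exact exists_isCovMaxLevel_of_isInternal hint hℵ

end Divisible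

section Reduction

theorem mk_iUnion_lt_of_forall_iUnion_eq_univ {α : Type u}
    (h : ∀ B : ℕ → Set α, ⋃ n, B n = Set.univ → ∃ n, #α ≤ #(B n)) {B : ℕ → Set α}
    (hB : ∀ n, #(B n) < #α) : #(⋃ n, B n) < #α := by
  refine (mk_set_le _).lt_of_ne fun heq => ?_
  obtain ⟨e⟩ := Cardinal.eq.1 heq
  have hcover : ⋃ n, e '' (Subtype.val ⁻¹' B n) = Set.univ := eq_univ_of_forall fun a => by
    obtain ⟨n, hn⟩ := mem_iUnion.1 (e.symm a).2
    exact mem_iUnion.2 ⟨n, e.symm a, hn, e.apply_symm_apply a⟩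
  obtain ⟨n, hn⟩ := h _ hcover
  exact (hn.trans (mk_image_le.trans (mk_preimage_of_injective _ _ Subtype.val_injective))).not_gt
    (hB n)

theorem aleph0_lt_mk_of_forall_iUnion_eq_univ {α : Type u} [Infinite α]
    (h : ∀ B : ℕ → Set α, ⋃ n, B n = Set.univ → ∃ n, #α ≤ #(B n)) : ℵ₀ < #α := by
  refine (aleph0_le_mk α).lt_of_ne fun heq => ?_
  have : Countable α := mk_le_aleph0_iff.1 heq.ge
  obtain ⟨f, hf⟩ := exists_surjective_nat α
  obtain ⟨n, hn⟩ := h (fun n => {f n}) (by rw [iUnion_singleton_eq_range, hf.range_eq])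
  rw [mk_singleton] at hn
  exact (one_lt_aleph0.trans_le (aleph0_le_mk α)).not_ge hn

variable {G : Type u} [AddCommGroup G]

theorem surjective_nsmul_of_prime
    (h : ∀ p : ℕ, p.Prime → Function.Surjective fun x : G => p • x) (n : ℕ) (hn : n ≠ 0) :
    Function.Surjective fun x : G => n • x := by
  induction n using Nat.recOnMul with
  | zero => exact absurd rfl hn
  | one => exact fun y => ⟨y, one_nsmul y⟩
  | prime p hp => exact h p hp
  | mul a b ha hb =>
    intro y
    obtain ⟨z, rfl⟩ := ha (left_ne_zero_of_mul hn) y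
    obtain ⟨w, rfl⟩ := hb (right_ne_zero_of_mul hn) z
    exact ⟨w, mul_nsmul' w a b⟩

theorem mk_quotient_eq_of_mk_lt [Infinite G] {K : AddSubgroup G} (hK : #K < #G) :
    #(G ⧸ K) = #G := by
  refine (mk_le_of_surjective (QuotientAddGroup.mk'_surjective K)).antisymm (not_lt.1 fun hlt => ?_)
  have := mk_congr K.addGroupEquivQuotientProdAddSubgroup
  rw [mk_prod, lift_id, lift_id] at this
  exact (this.trans_lt (mul_lt_of_lt (aleph0_le_mk G) hlt hK)).false

theorem exists_addSubgroup_mk_lt_quotient_divisible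
    (hunion : ∀ B : ℕ → Set G, (∀ n, #(B n) < #G) → #(⋃ n, B n) < #G) (hℵ : ℵ₀ < #G)
    (hp : ∀ p : ℕ, p.Prime → #(G ⧸ (nsmulAddMonoidHom p : G →+ G).range) < #G) :
    ∃ K : AddSubgroup G, #K < #G ∧ ∀ n : ℕ, n ≠ 0 → Function.Surjective fun x : G ⧸ K => n • x := by
  classical
  let R : ℕ → Set G := fun p =>
    if p.Prime then range (Quotient.out : G ⧸ (nsmulAddMonoidHom p : G →+ G).range → G) else ∅
  have hR : ∀ p, #(R p) < #G := fun p => by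
    by_cases hpp : p.Prime
    · simpa [R, hpp] using mk_range_le.trans_lt (hp p hpp)
    · simpa [R, hpp] using (aleph0_pos.trans hℵ)
  -- `K` contains representatives of all cosets of `pG`, so `G = K + pG` for every prime `p`
  let K := AddSubgroup.closure (⋃ p, R p)
  refine ⟨K, ?_, surjective_nsmul_of_prime fun p hpp y => ?_⟩
  · rw [show K = _ from (Submodule.span_int_eq_addSubgroupClosure _).symm]
    exact (mk_span_int_le _).trans_lt (max_lt (hunion R hR) hℵ)
  · obtain ⟨x, rfl⟩ := QuotientAddGroup.mk'_surjective _ y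
    set r := (QuotientAddGroup.mk (s := (nsmulAddMonoidHom p : G →+ G).range) x).out
    obtain ⟨z, hz⟩ : -r + x ∈ (nsmulAddMonoidHom p : G →+ G).range :=
      QuotientAddGroup.eq.1 (QuotientAddGroup.out_eq' _)
    refine ⟨(z : G ⧸ K), ?_⟩
    change p • (z : G ⧸ K) = (x : G ⧸ K)
    rw [← QuotientAddGroup.mk_nsmul, QuotientAddGroup.eq, show p • z = -r + x from hz, neg_add,
      neg_neg, neg_add_cancel_right]
    refine AddSubgroup.subset_closure (mem_iUnion.2 ⟨p, ?_⟩)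
    simp only [R, if_pos hpp]
    exact mem_range_self _

end Reduction

theorem exists_isCovMaxLevel (G : Type u) [AddCommGroup G] [Infinite G] :
    ∃ ℓ : G → ℕ, IsCovMaxLevel ℓ := by
  by_cases hcov : ∃ B : ℕ → Set G, ⋃ n, B n = Set.univ ∧ ∀ n, #(B n) < #G
  · obtain ⟨B, hB, hBc⟩ := hcov
    exact exists_isCovMaxLevel_of_iUnion_eq_univ hB hBc
  push Not at hcov
  have hℵ := aleph0_lt_mk_of_forall_iUnion_eq_univ hcov
  by_cases hp : ∃ p : ℕ, p.Prime ∧ #(G ⧸ (nsmulAddMonoidHom p : G →+ G).range) = #G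
  · obtain ⟨p, hp, hcard⟩ := hp
    have : Fact p.Prime := ⟨hp⟩
    let _ : Module (ZMod p) (G ⧸ (nsmulAddMonoidHom p : G →+ G).range) :=
      AddCommGroup.zmodModule fun x => by
        induction x using QuotientAddGroup.induction_on with
        | H z => rw [← QuotientAddGroup.mk_nsmul, QuotientAddGroup.eq_zero_iff]; exact ⟨z, rfl⟩
    obtain ⟨ℓ, hℓ⟩ := exists_isCovMaxLevel_of_module (K := ZMod p) (hcard ▸ hℵ)
    exact ⟨_, hℓ.comp (QuotientAddGroup.mk'_surjective _) hcard.ge⟩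
  · push Not at hp
    obtain ⟨K, hK, hdiv⟩ := exists_addSubgroup_mk_lt_quotient_divisible
      (fun B hB => mk_iUnion_lt_of_forall_iUnion_eq_univ hcov hB) hℵ
      fun p hpp => (mk_le_of_surjective (QuotientAddGroup.mk'_surjective _)).lt_of_ne (hp p hpp)
    let _ : DivisibleBy (G ⧸ K) ℕ := divisibleByOfSMulRightSurj _ _ fun hn => hdiv _ hn
    let _ : DivisibleBy (G ⧸ K) ℤ := AddGroup.divisibleByIntOfDivisibleByNat _
    have hcard := mk_quotient_eq_of_mk_lt hK
    obtain ⟨ℓ, hℓ⟩ := exists_isCovMaxLevel_of_divisible (hcard ▸ hℵ)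
    exact ⟨_, hℓ.comp (QuotientAddGroup.mk'_surjective K) hcard.ge⟩

/-- Every infinite Abelian group `G` of cardinality `κ` admits a partition into countably
many cells `A n` with `covAdd (A n - A n) = κ` for every `n`. -/
theorem partition_covAdd_eq_card_of_abelian {G : Type*} [AddCommGroup G] [Infinite G] :
    ∃ A : ℕ → Set G,
      (⋃ n, A n) = Set.univ ∧
      (∀ m n, m ≠ n → Disjoint (A m) (A n)) ∧
      ∀ n, covAdd (A n - A n) = #G := by
  obtain ⟨ℓ, hℓ⟩ := exists_isCovMaxLevel G
  exact exists_partition_of_isCovMaxLevel hℓ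
end

section
/- Let $G$ be an infinite group of cardinality $\varkappa$ admitting a group homomorphism onto an Abelian group of cardinality $\varkappa$. Then $G$ can be partitioned into countably many cells $G=\bigcup_{n\in\omega}A_n$ such that $cov(A_nA_n^{-1})=\varkappa$ for each $n\in\omega$. -/
open Cardinal Pointwise

/-
Every abelian group `B` embeds into the direct sum `⊕_B (ℚ × ℚ/ℤ)` of countable groups: Zorn's
lemma gives an injective homomorphism on an essential subgroup, and Baer's criterion extends it
to `B` since the target is divisible. For uncountable `B` the support size `ν b` of the image of
`b` is subadditive, and for any `X` with `|X| < |B|` there are elements whose support is large and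
disjoint from the supports of all `x ∈ X`, so that `b - x` is long for every `x ∈ X`. Hence the
fibres `A` of `ν` partition `B`, and `A - A` lies in a ball of `ν` that no fewer than `|B|`
translates cover. Countable groups are split into singletons. Preimages under a surjection onto
`B` transfer the partition to `G`.
-/

universe u

open Function

section Cov

variable {G : Type u} [Group G]

theorem exists_mk_eq_cov {T : Set G} (hT : T.Nonempty) :
    ∃ X : Set G, X * T = Set.univ ∧ #X = cov T := by
  obtain ⟨X, hX, hXT⟩ := csInf_mem (s := {c : Cardinal | ∃ X : Set G, #X = c ∧ X * T = Set.univ})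
    ⟨#G, Set.univ, mk_univ, Set.univ_mul hT⟩
  exact ⟨X, hXT, hX⟩

theorem cov_le_mk {T : Set G} (hT : T.Nonempty) : cov T ≤ #G :=
  csInf_le' ⟨Set.univ, mk_univ, Set.univ_mul hT⟩

theorem le_cov {T : Set G} (hT : T.Nonempty) {c : Cardinal}
    (h : ∀ X : Set G, X * T = Set.univ → c ≤ #X) : c ≤ cov T := by
  obtain ⟨X, hXT, hX⟩ := exists_mk_eq_cov hT
  exact hX ▸ h X hXT

theorem cov_empty : cov (∅ : Set G) = 0 := by
  refine (congrArg sInf (Set.eq_empty_of_forall_notMem ?_)).trans Cardinal.sInf_empty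
  rintro c ⟨X, -, hX⟩
  exact Set.empty_ne_univ (by rwa [Set.mul_empty] at hX)

theorem nonempty_of_cov_ne_zero {T : Set G} (h : cov T ≠ 0) : T.Nonempty :=
  Set.nonempty_iff_ne_empty.2 fun hT => h (hT ▸ cov_empty)

theorem cov_image_le {H : Type u} [Group H] (f : G →* H) (hf : Surjective f)
    (T : Set G) : cov (f '' T) ≤ cov T := by
  rcases T.eq_empty_or_nonempty with rfl | hT
  · rw [Set.image_empty, cov_empty]
    exact zero_le
  obtain ⟨X, hXT, hX⟩ := exists_mk_eq_cov hT
  calc cov (f '' T) ≤ #(f '' X) :=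
        csInf_le' ⟨f '' X, rfl, by rw [← Set.image_mul, hXT, Set.image_univ_of_surjective hf]⟩
    _ ≤ #X := mk_image_le
    _ = cov T := hX

end Cov

def IsMaxCovPartition {G : Type u} [Group G] (A : ℕ → Set G) : Prop :=
  (⋃ n, A n) = Set.univ ∧ Pairwise (Disjoint on A) ∧ ∀ n, cov (A n * (A n)⁻¹) = #G

theorem IsMaxCovPartition.comap {G H : Type u} [Group G] [Group H] {A : ℕ → Set H}
    (hA : IsMaxCovPartition A) (f : G →* H) (hf : Surjective f) (hcard : #H = #G) :
    IsMaxCovPartition fun n => f ⁻¹' A n := by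
  obtain ⟨hcover, hdisj, hcov⟩ := hA
  refine ⟨by rw [← Set.preimage_iUnion, hcover, Set.preimage_univ],
    fun m n hmn => (hdisj hmn).preimage f, fun n => ?_⟩
  have himage : f '' (f ⁻¹' A n * (f ⁻¹' A n)⁻¹) = A n * (A n)⁻¹ := by
    rw [Set.image_mul, Set.image_inv, Set.image_preimage_eq _ hf]
  have hne : (f ⁻¹' A n * (f ⁻¹' A n)⁻¹).Nonempty := by
    have : (A n * (A n)⁻¹).Nonempty := nonempty_of_cov_ne_zero (by rw [hcov]; exact mk_ne_zero H)
    rw [← himage] at this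
    exact this.of_image
  refine le_antisymm (cov_le_mk hne) ?_
  calc #G = cov (f '' (f ⁻¹' A n * (f ⁻¹' A n)⁻¹)) := by rw [himage, hcov, hcard]
    _ ≤ _ := cov_image_le f hf _

theorem exists_isMaxCovPartition_of_countable (G : Type u) [Group G] [Countable G] [Infinite G] :
    ∃ A : ℕ → Set G, IsMaxCovPartition A := by
  obtain ⟨e⟩ : Nonempty (G ≃ ℕ) := nonempty_equiv_of_countable
  refine ⟨fun n => {e.symm n}, Set.eq_univ_of_forall fun g => Set.mem_iUnion.2 ⟨e g, by simp⟩,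
    fun m n hmn => Set.disjoint_singleton.2 (e.symm.injective.ne hmn), fun n => ?_⟩
  rw [Set.inv_singleton, Set.singleton_mul_singleton, mul_inv_cancel]
  refine le_antisymm (cov_le_mk (Set.singleton_nonempty 1))
    (le_cov (Set.singleton_nonempty 1) fun X hX => ?_)
  rw [Set.singleton_one, mul_one] at hX
  rw [hX, mk_univ]

theorem exists_isMaxCovPartition_of_length {G : Type u} [Group G] [Nontrivial G] (ν : G → ℕ)
    (hν : ∀ a b, ν (a * b⁻¹) ≤ ν a + ν b)
    (hspread : ∀ X : Set G, #X < #G → ∀ N, ∃ g, ∀ x ∈ X, N < ν (x⁻¹ * g)) :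
    ∃ A : ℕ → Set G, IsMaxCovPartition A := by
  set p : ℕ → Prop := (· ∈ Set.range ν)
  have hp : (Set.ofPred p).Infinite := Set.infinite_of_not_bddAbove fun ⟨N, hN⟩ => by
    obtain ⟨g, hg⟩ := hspread {1} (by simpa using one_lt_iff_nontrivial.2 ‹_›) N
    exact (hg 1 rfl).not_ge (hN ⟨1⁻¹ * g, rfl⟩)
  refine ⟨fun n => ν ⁻¹' {Nat.nth p n}, Set.eq_univ_of_forall fun g => ?_,
    fun m n hmn => Disjoint.preimage ν (Set.disjoint_singleton.2 ((Nat.nth_injective hp).ne hmn)),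
    fun n => ?_⟩
  · obtain ⟨n, -, hn⟩ := Nat.exists_lt_card_nth_eq (p := p) ⟨g, rfl⟩
    exact Set.mem_iUnion.2 ⟨n, hn.symm⟩
  obtain ⟨a, ha⟩ := Nat.nth_mem_of_infinite hp n
  have hne : (ν ⁻¹' {Nat.nth p n} * (ν ⁻¹' {Nat.nth p n})⁻¹).Nonempty :=
    ⟨a * a⁻¹, Set.mul_mem_mul ha (by simpa using ha)⟩
  refine le_antisymm (cov_le_mk hne) (le_cov hne fun X hX => ?_)
  by_contra! hlt
  obtain ⟨g, hg⟩ := hspread X hlt (2 * Nat.nth p n)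
  obtain ⟨x, hx, y, hy, rfl⟩ := Set.mem_mul.1 (hX ▸ Set.mem_univ g)
  obtain ⟨b, hb, c, hc, rfl⟩ := Set.mem_mul.1 hy
  have hlen := hg x hx
  have hsub := hν b c⁻¹
  simp only [Set.mem_preimage, Set.mem_singleton_iff, Set.mem_inv] at hb hc
  rw [inv_mul_cancel_left] at hlen
  rw [inv_inv, hb, hc] at hsub
  omega

theorem mk_finsupp_lt {α : Type u} {β : Type} [Zero β] [Countable β] {κ : Cardinal.{u}}
    (hα : #α < κ) (hκ : ℵ₀ < κ) : #(α →₀ β) < κ := by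
  classical
  calc #(α →₀ β) ≤ #(Finset (α × ULift.{u} β)) :=
        mk_le_of_injective (f := fun x => (x.mapRange ULift.up rfl).graph)
          ((Finsupp.graph_injective _ _).comp (Finsupp.mapRange_injective _ rfl ULift.up_injective))
    _ ≤ #(List (α × ULift.{u} β)) := mk_le_of_surjective List.toFinset_surjective
    _ ≤ max ℵ₀ #(α × ULift.{u} β) := mk_list_le_max _
    _ < κ := max_lt hκ (by
        rw [mk_prod, lift_id]
        exact mul_lt_of_lt hκ.le hα (mk_le_aleph0.trans_lt hκ))

section Support

variable {B ι : Type u} [AddCommGroup B] {C : Type} [AddCommGroup C] [Countable C]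

theorem exists_ne_zero_support_disjoint (hB : ℵ₀ < #B) (φ : B →+ (ι →₀ C)) {Λ : Set ι}
    (hΛ : #Λ < #B) : ∃ b ≠ 0, Disjoint (↑(φ b).support) Λ := by
  obtain ⟨x, y, hxy, hne⟩ : ∃ x y, (φ x).subtypeDomain (· ∈ Λ) = (φ y).subtypeDomain (· ∈ Λ) ∧
      x ≠ y := by
    by_contra! h
    exact (mk_finsupp_lt (β := C) hΛ hB).not_ge (mk_le_of_injective fun x y hxy => h x y hxy)
  refine ⟨x - y, sub_ne_zero.2 hne, Set.disjoint_right.2 fun i hi => ?_⟩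
  have : φ x i = φ y i := by simpa using DFunLike.congr_fun hxy ⟨i, hi⟩
  simp [this]

theorem exists_le_card_support_disjoint (hB : ℵ₀ < #B) {φ : B →+ (ι →₀ C)} (hφ : Injective φ)
    {Λ : Set ι} (hΛ : #Λ < #B) (N : ℕ) :
    ∃ b, N ≤ (φ b).support.card ∧ Disjoint (↑(φ b).support) Λ := by
  classical
  induction N with
  | zero => exact ⟨0, by simp⟩
  | succ N ih =>
    obtain ⟨b, hbN, hbΛ⟩ := ih
    have hΛ' : #(Λ ∪ ↑(φ b).support : Set ι) < #B :=
      (mk_union_le _ _).trans_lt (add_lt_of_lt hB.le hΛ (mk_le_aleph0.trans_lt hB))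
    obtain ⟨c, hc0, hcΛ⟩ := exists_ne_zero_support_disjoint hB φ hΛ'
    rw [Set.disjoint_union_right, Finset.disjoint_coe] at hcΛ
    have hsupp : (φ (b + c)).support = (φ b).support ∪ (φ c).support := by
      rw [map_add, Finsupp.support_add_eq hcΛ.2.symm]
    have hc : (φ c).support.Nonempty :=
      Finsupp.support_nonempty_iff.2 ((map_ne_zero_iff φ hφ).2 hc0)
    refine ⟨b + c, ?_, ?_⟩
    · rw [hsupp, Finset.card_union_of_disjoint hcΛ.2.symm]
      have := hc.card_pos
      omega
    · rw [hsupp, Finset.coe_union, Set.disjoint_union_left]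
      exact ⟨hbΛ, hcΛ.1⟩

theorem exists_forall_lt_card_support_sub_s5 (hB : ℵ₀ < #B) {φ : B →+ (ι →₀ C)}
    (hφ : Injective φ) {X : Set B} (hX : #X < #B) (N : ℕ) :
    ∃ b, ∀ x ∈ X, N < (φ (b - x)).support.card := by
  set Λ : Set ι := ⋃ x ∈ X, ↑(φ x).support
  have hΛ : #Λ < #B := by
    refine (mk_biUnion_le _ X).trans_lt (mul_lt_of_lt hB.le hX ?_)
    exact (ciSup_le' fun _ => mk_le_aleph0).trans_lt hB
  obtain ⟨b, hbN, hbΛ⟩ := exists_le_card_support_disjoint hB hφ hΛ (N + 1)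
  refine ⟨b, fun x hx => Nat.lt_of_succ_le (hbN.trans (Finset.card_le_card fun i hi => ?_))⟩
  have hxi : φ x i = 0 := Finsupp.notMem_support_iff.1 fun h =>
    Set.disjoint_left.1 hbΛ hi (Set.mem_biUnion hx h)
  simpa [hxi] using hi

end Support

noncomputable instance Finsupp.divisibleBy {ι C : Type*} [AddCommGroup C] [DivisibleBy C ℤ] :
    DivisibleBy (ι →₀ C) ℤ :=
  divisibleByOfSMulRightSurj _ _ fun {n} hn => by
    convert Finsupp.mapRange_surjective _ (smul_zero n) (DivisibleBy.surjective_smul C ℤ hn)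
    ext
    simp

section Embedding

variable {B : Type u} [AddCommGroup B] {C : Type*} [AddCommGroup C]

/-- `Γ` is the graph of an injective partial homomorphism `B → (B →₀ C)` whose values are
supported in its domain, which keeps the coordinate `c` free when the map is extended to `c`. -/
def IsAdmissibleGraph (Γ : Submodule ℤ (B × (B →₀ C))) : Prop :=
  (∀ p ∈ Γ, p.1 = 0 ↔ p.2 = 0) ∧
    ∀ p ∈ Γ, ∀ i ∈ p.2.support, i ∈ Γ.map (LinearMap.fst ℤ B (B →₀ C))

theorem isAdmissibleGraph_bot : IsAdmissibleGraph (⊥ : Submodule ℤ (B × (B →₀ C))) :=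
  ⟨fun p hp => by simp [(Submodule.mem_bot ℤ).1 hp], fun p hp => by
    simp [(Submodule.mem_bot ℤ).1 hp]⟩

theorem IsAdmissibleGraph.sSup {c : Set (Submodule ℤ (B × (B →₀ C)))} (hne : c.Nonempty)
    (hdir : DirectedOn (· ≤ ·) c) (hc : ∀ Γ ∈ c, IsAdmissibleGraph Γ) :
    IsAdmissibleGraph (sSup c) := by
  refine ⟨fun p hp => ?_, fun p hp i hi => ?_⟩
  all_goals obtain ⟨Γ, hΓ, hpΓ⟩ := (Submodule.mem_sSup_of_directed hne hdir).1 hp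
  · exact (hc Γ hΓ).1 p hpΓ
  · exact Submodule.map_mono (le_sSup hΓ) ((hc Γ hΓ).2 p hpΓ i hi)

theorem IsAdmissibleGraph.sup_span_singleton {Γ : Submodule ℤ (B × (B →₀ C))}
    (hΓ : IsAdmissibleGraph Γ) {c : B} (hc : c ∉ Γ.map (LinearMap.fst ℤ B (B →₀ C)))
    (hmul : ∀ k : ℤ, k • c ∈ Γ.map (LinearMap.fst ℤ B (B →₀ C)) → k • c = 0) {e : C}
    (he : addOrderOf e = addOrderOf c) :
    IsAdmissibleGraph (Γ ⊔ ℤ ∙ (c, Finsupp.single c e)) := by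
  classical
  have he' : ∀ k : ℤ, k • e = 0 ↔ k • c = 0 := fun k => by
    rw [← addOrderOf_dvd_iff_zsmul_eq_zero, he, addOrderOf_dvd_iff_zsmul_eq_zero]
  set q : B × (B →₀ C) := (c, Finsupp.single c e)
  have hq : ∀ k : ℤ, k • q = 0 ↔ k • c = 0 := fun k => by
    rw [Prod.smul_mk, Finsupp.smul_single, Prod.mk_eq_zero, Finsupp.single_eq_zero, he', and_self]
  refine ⟨fun p hp => ?_, fun p hp i hi => ?_⟩
  all_goals
    obtain ⟨γ, hγ, _, hk, rfl⟩ := Submodule.mem_sup.1 hp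
    obtain ⟨k, rfl⟩ := Submodule.mem_span_singleton.1 hk
  · have hγc : γ.2 c = 0 := Finsupp.notMem_support_iff.1 fun h => hc (hΓ.2 γ hγ c h)
    have hkc : (γ + k • q).1 = 0 ∨ (γ + k • q).2 = 0 → k • c = 0 := by
      rintro (h | h)
      · have h' : γ.1 + k • c = 0 := h
        exact hmul k (by
          rw [eq_neg_of_add_eq_zero_right h']
          exact neg_mem (Submodule.mem_map_of_mem hγ))
      · exact (he' k).1 (by simpa [q, hγc] using DFunLike.congr_fun h c)
    have hpγ : (γ + k • q).1 = 0 ∨ (γ + k • q).2 = 0 → γ + k • q = γ := fun h => by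
      rw [(hq k).2 (hkc h), add_zero]
    refine ⟨fun h => ?_, fun h => ?_⟩
    · rw [hpγ (.inl h)]
      exact (hΓ.1 γ hγ).1 (hpγ (.inl h) ▸ h)
    · rw [hpγ (.inr h)]
      exact (hΓ.1 γ hγ).2 (hpγ (.inr h) ▸ h)
  · have hqmem : q ∈ Γ ⊔ ℤ ∙ q := Submodule.mem_sup_right (Submodule.mem_span_singleton_self q)
    rcases Finset.mem_union.1 (Finsupp.support_add hi) with h | h
    · exact Submodule.map_mono le_sup_left (hΓ.2 γ hγ i h)
    · have h' : i ∈ (Finsupp.single c (k • e)).support := by simpa [q, Finsupp.smul_single] using h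
      rw [Finset.mem_singleton.1 (Finsupp.support_single_subset h')]
      exact Submodule.mem_map_of_mem hqmem

theorem exists_essential_submodule_injective (hC : ∀ n : ℕ, ∃ e : C, addOrderOf e = n) :
    ∃ (S : Submodule ℤ B) (ψ : S →ₗ[ℤ] (B →₀ C)), Injective ψ ∧
      ∀ c : B, c ≠ 0 → ∃ k : ℤ, k • c ∈ S ∧ k • c ≠ 0 := by
  obtain ⟨Γ, -, hΓ, hmax⟩ :=
    zorn_le_nonempty₀ {Γ : Submodule ℤ (B × (B →₀ C)) | IsAdmissibleGraph Γ}
    (fun c hc hchain Γ₀ hΓ₀ => ⟨sSup c, .sSup ⟨Γ₀, hΓ₀⟩ hchain.directedOn hc, fun _ => le_sSup⟩)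
    ⊥ isAdmissibleGraph_bot
  have hg : ∀ p ∈ Γ, p.1 = 0 → p.2 = 0 := fun p hp => (hΓ.1 p hp).1
  refine ⟨Γ.map (LinearMap.fst ℤ B (B →₀ C)), Γ.toLinearPMap.toFun,
    (injective_iff_map_eq_zero Γ.toLinearPMap.toFun).2 fun x hx => ?_, fun c hc0 => ?_⟩
  · have := Γ.mem_graph_toLinearPMap hg x
    exact Subtype.ext ((hΓ.1 _ this).2 hx)
  · by_contra! hmul
    have hcS : c ∉ Γ.map (LinearMap.fst ℤ B (B →₀ C)) := fun h =>
      hc0 (by simpa using hmul 1 (by rwa [one_zsmul]))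
    obtain ⟨e, he⟩ := hC (addOrderOf c)
    have := hmax (hΓ.sup_span_singleton hcS hmul he) le_sup_left
      (Submodule.mem_sup_right (Submodule.mem_span_singleton_self _))
    exact hcS (Submodule.mem_map_of_mem this)

theorem exists_injective_addMonoidHom_finsupp [DivisibleBy C ℤ]
    (hC : ∀ n : ℕ, ∃ e : C, addOrderOf e = n) :
    ∃ φ : B →+ (B →₀ C), Injective φ := by
  obtain ⟨S, ψ, hψ, hess⟩ := exists_essential_submodule_injective (B := B) hC
  obtain ⟨φ, hφ⟩ := (Module.Baer.of_divisible (B →₀ C)).extension_property S.subtype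
    S.injective_subtype ψ
  refine ⟨φ.toAddMonoidHom, (injective_iff_map_eq_zero _).2 fun b hb => ?_⟩
  by_contra hb0
  obtain ⟨k, hkS, hk0⟩ := hess b hb0
  have : ψ ⟨k • b, hkS⟩ = 0 := by
    rw [← hφ, LinearMap.comp_apply, Submodule.subtype_apply, map_zsmul, show φ b = 0 from hb,
      smul_zero]
  exact hk0 (congrArg Subtype.val (hψ (this.trans (map_zero ψ).symm)))

end Embedding

theorem exists_addOrderOf_eq (n : ℕ) : ∃ e : ℚ × AddCircle (1 : ℚ), addOrderOf e = n := by
  rcases n.eq_zero_or_pos with rfl | hn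
  · refine ⟨(1, 0), ?_⟩
    rw [Prod.addOrderOf, addOrderOf_zero, Nat.lcm_one_right]
    exact addOrderOf_eq_zero_iff'.2 fun n hn => by simpa using hn.ne'
  · refine ⟨(0, ↑((1 : ℚ) / n)), ?_⟩
    rw [Prod.addOrderOf, addOrderOf_zero, AddCircle.addOrderOf_period_div hn, Nat.lcm_one_left]

instance {𝕜 : Type*} [AddCommGroup 𝕜] [Countable 𝕜] (p : 𝕜) : Countable (AddCircle p) :=
  QuotientAddGroup.mk_surjective.countable

theorem exists_isMaxCovPartition_of_aleph0_lt {B : Type u} [CommGroup B] (hB : ℵ₀ < #B) :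
    ∃ A : ℕ → Set B, IsMaxCovPartition A := by
  obtain ⟨φ, hφ⟩ := exists_injective_addMonoidHom_finsupp (B := Additive B) exists_addOrderOf_eq
  have : Nontrivial B := one_lt_iff_nontrivial.1 (one_lt_aleph0.trans hB)
  refine exists_isMaxCovPartition_of_length (fun g => (φ (.ofMul g)).support.card)
    (fun a b => ?_) (fun X hX N => ?_)
  · classical
    rw [ofMul_mul, ofMul_inv, ← sub_eq_add_neg, map_sub]
    exact (Finset.card_le_card Finsupp.support_sub).trans (Finset.card_union_le _ _)
  · obtain ⟨g, hg⟩ := exists_forall_lt_card_support_sub_s5 (B := Additive B) hB hφ hX N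
    refine ⟨g.toMul, fun x hx => ?_⟩
    rw [ofMul_mul, ofMul_inv, neg_add_eq_sub]
    exact hg x hx

theorem exists_isMaxCovPartition (B : Type u) [CommGroup B] [Infinite B] :
    ∃ A : ℕ → Set B, IsMaxCovPartition A := by
  rcases (aleph0_le_mk B).eq_or_lt with hB | hB
  · have : Countable B := mk_le_aleph0_iff.1 hB.ge
    exact exists_isMaxCovPartition_of_countable B
  · exact exists_isMaxCovPartition_of_aleph0_lt hB

/-- If an infinite group `G` of cardinality `κ` admits a surjective homomorphism onto an
Abelian group of cardinality `κ`, then `G` admits a partition into countably many cells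
`A n` with `cov (A n * (A n)⁻¹) = κ` for every `n`. -/
theorem partition_cov_eq_card_of_abelian_image {G : Type u} [Group G] [Infinite G]
    {B : Type u} [CommGroup B] (f : G →* B) (hf : Function.Surjective f)
    (hB : #B = #G) :
    ∃ A : ℕ → Set G,
      (⋃ n, A n) = Set.univ ∧
      (∀ m n, m ≠ n → Disjoint (A m) (A n)) ∧
      ∀ n, cov (A n * (A n)⁻¹) = #G := by
  have : Infinite B := infinite_iff.2 (hB ▸ infinite_iff.1 ‹Infinite G›)
  obtain ⟨A, hA⟩ := exists_isMaxCovPartition B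
  exact ⟨_, hA.comap f hf hB⟩
end

section
/- Let $G$ be an infinite group of cardinality $\varkappa$ with $cf(\varkappa)=\aleph_0$. Then $G$ can be partitioned into countably many cells $G=\bigcup_{n\in\omega}A_n$ such that $cov(A_nA_n^{-1})=\varkappa$ for each $n\in\omega$. -/
open Cardinal Pointwise

/-! Since `#G` has countable cofinality, `G` is a countable union of sets of size `< #G`
(initial segments of a well-order of type `(#G).ord`). Make this cover disjoint, take a sequence of
distinct points `f n` out of all pieces and put `f n` back into the `n`-th piece: this partitions
`G` into nonempty cells of size `< #G`. For such a cell `A`, also `A * A⁻¹` is nonempty of size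
`< #G`, and a set `B` of size `< #G` needs `#G` translates to cover `G`, as `#(X * B) ≤ #X * #B`. -/

open Set Function

theorem cov_eq_card_of_mk_lt {G : Type*} [Group G] [Infinite G] {B : Set G}
    (hB : B.Nonempty) (hBG : #B < #G) : cov B = #G := by
  obtain ⟨b, hb⟩ := hB
  have huniv : (Set.univ : Set G) * B = Set.univ :=
    eq_univ_of_forall fun x ↦ ⟨x * b⁻¹, trivial, b, hb, by group⟩
  have hmem : #G ∈ {c : Cardinal | ∃ X : Set G, #X = c ∧ X * B = Set.univ} :=
    ⟨Set.univ, mk_univ, huniv⟩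
  refine le_antisymm (csInf_le' hmem) (le_csInf ⟨_, hmem⟩ ?_)
  rintro c ⟨X, rfl, hXB⟩
  by_contra! hXG
  have hG : #G ≤ #X * #B := by
    calc #G = #(X * B) := by rw [hXB, mk_univ]
      _ ≤ #X * #B := mk_mul_le
  exact hG.not_gt (mul_lt_of_lt (aleph0_le_mk G) hXG hBG)

theorem cov_mul_inv_eq_card {G : Type*} [Group G] [Infinite G] {A : Set G}
    (hA : A.Nonempty) (hAG : #A < #G) : cov (A * A⁻¹) = #G := by
  obtain ⟨a, ha⟩ := hA
  refine cov_eq_card_of_mk_lt ⟨a * a⁻¹, mul_mem_mul ha (inv_mem_inv.mpr ha)⟩ ?_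
  calc #(A * A⁻¹) ≤ #A * #(A⁻¹ : Set G) := mk_mul_le
    _ = #A * #A := by rw [mk_inv]
    _ < #G := mul_lt_of_lt (aleph0_le_mk G) hAG hAG

theorem exists_iUnion_eq_univ_mk_lt_of_cof_ord_eq_aleph0 {α : Type*} [Infinite α]
    (hcof : (#α).ord.cof = ℵ₀) : ∃ s : ℕ → Set α, ⋃ n, s n = Set.univ ∧ ∀ n, #(s n) < #α := by
  obtain ⟨_, _, hα⟩ := exists_ord_eq_type_lt α
  rw [hα, Ordinal.cof_type] at hcof
  obtain ⟨c, hc, hcard⟩ := Order.exists_cof_eq α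
  rw [hcof] at hcard
  have hc_ne : c.Nonempty :=
    nonempty_iff_ne_empty.mpr fun h ↦ aleph0_ne_zero (by simpa [h] using hcard.symm)
  obtain ⟨f, rfl⟩ := (le_aleph0_iff_set_countable.mp hcard.le).exists_eq_range hc_ne
  refine ⟨fun n ↦ Iic (f n), eq_univ_of_forall fun x ↦ ?_,
    fun n ↦ mk_Iic_lt _ hα (aleph0_le_mk α)⟩
  obtain ⟨_, ⟨n, rfl⟩, hxn⟩ := hc x
  exact mem_iUnion.mpr ⟨n, hxn⟩

theorem exists_partition_mem_subset_insert {α : Type*} {s : ℕ → Set α}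
    (hs : ⋃ n, s n = Set.univ) {f : ℕ → α} (hf : Injective f) :
    ∃ A : ℕ → Set α, ⋃ n, A n = Set.univ ∧ Pairwise (Disjoint on A) ∧
      ∀ n, f n ∈ A n ∧ A n ⊆ insert (f n) (s n) := by
  refine ⟨fun n ↦ insert (f n) (disjointed s n \ range f), ?_, ?_, fun n ↦
    ⟨mem_insert _ _, insert_subset_insert (sdiff_subset.trans (disjointed_le s n))⟩⟩
  · refine eq_univ_of_forall fun x ↦ ?_
    by_cases hx : x ∈ range f
    · obtain ⟨n, rfl⟩ := hx
      exact mem_iUnion.mpr ⟨n, mem_insert _ _⟩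
    · have : x ∈ ⋃ n, disjointed s n := by rw [iUnion_disjointed, hs]; trivial
      obtain ⟨n, hn⟩ := mem_iUnion.mp this
      exact mem_iUnion.mpr ⟨n, mem_insert_of_mem _ ⟨hn, hx⟩⟩
  · intro m n hmn
    refine disjoint_left.mpr ?_
    rintro x (rfl | ⟨hxm, hxf⟩) (hxn | ⟨hxn, hxf'⟩)
    · exact hmn (hf hxn)
    · exact hxf' (mem_range_self m)
    · exact hxf ⟨n, hxn.symm⟩
    · exact disjoint_left.mp (disjoint_disjointed s hmn) hxm hxn

/-- Every infinite group `G` whose cardinality has countable cofinality admits a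
partition into countably many cells `A n` with `cov (A n * (A n)⁻¹) = #G` for all `n`. -/
theorem partition_cov_eq_card_of_cof_eq_aleph0 {G : Type*} [Group G] [Infinite G]
    (hcof : (#G).ord.cof = ℵ₀) :
    ∃ A : ℕ → Set G,
      (⋃ n, A n) = Set.univ ∧
      (∀ m n, m ≠ n → Disjoint (A m) (A n)) ∧
      ∀ n, cov (A n * (A n)⁻¹) = #G := by
  obtain ⟨s, hs, hs_lt⟩ := exists_iUnion_eq_univ_mk_lt_of_cof_ord_eq_aleph0 hcof
  let f := Infinite.natEmbedding G
  obtain ⟨A, hA_cover, hA_disj, hA⟩ := exists_partition_mem_subset_insert hs f.injective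
  refine ⟨A, hA_cover, fun m n hmn ↦ hA_disj hmn, fun n ↦ cov_mul_inv_eq_card ⟨f n, (hA n).1⟩ ?_⟩
  calc #(A n) ≤ #(insert (f n) (s n) : Set G) := mk_le_mk_of_subset (hA n).2
    _ ≤ #(s n) + 1 := mk_insert_le
    _ < #G := add_one_lt_of_lt (aleph0_le_mk G) (hs_lt n)
end
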